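/- arXiv:0712.2904 — 6 statements merged into one kernel-verified Lean document; each statement's English description precedes it below -/
import Mathlib

section
/- Let δ ≥ 1 be a real number and let a : ℕ → ℝ be the recursion sequence for δ. Then there exists r > 0 such that for every real z with 0 < z < r, the series Σ_{n≥0} a(n)·z^n converges, and its sum equals ((1−(δ−1)z)/(2z)) · (1 − Real.sqrt(1 − 4z/(1−(δ−1)z)^2)). (This is the paper's closed form for the moment generating function Φ of the cup element ∪ with respect to the trace Tr₀ in a subfactor planar algebra of index parameter δ.) -/
open Finset

lemma conv_sum_le (t : ℕ → ℝ) (ht : ∀ n, 0 ≤ t n) (N : ℕ) :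
    ∑ n ∈ range N, ∑ k ∈ range (n + 1), t k * t (n - k)
      ≤ (∑ k ∈ range N, t k) ^ 2 := by
  have swap := Finset.sum_Ico_Ico_comm 0 N (fun i j => t i * t (j - i))
  simp only [Nat.Ico_zero_eq_range] at swap
  rw [← swap, sq, Finset.sum_mul]
  refine Finset.sum_le_sum fun i hi => ?_
  rw [show (∑ j ∈ Finset.Ico i N, t i * t (j - i)) = t i * ∑ j ∈ Finset.Ico i N, t (j - i) by
    rw [Finset.mul_sum]]
  refine mul_le_mul_of_nonneg_left ?_ (ht i)
  rw [Finset.sum_Ico_eq_sum_range]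
  simp only [Nat.add_sub_cancel_left, add_comm i, Nat.add_sub_cancel]
  refine Finset.sum_le_sum_of_subset_of_nonneg ?_ (fun j _ _ => ht j)
  exact Finset.range_subset_range.2 (Nat.sub_le N i)

section
variable (δ : ℝ) (hδ : 1 ≤ δ) (a : ℕ → ℝ)
    (ha0 : a 0 = 1)
    (harec : ∀ n : ℕ, a (n + 1) =
      (δ - 1) * a n + ∑ k ∈ Finset.range (n + 1), a k * a (n - k))

include hδ ha0 harec

lemma a_nonneg : ∀ n, 0 ≤ a n := by
  intro n
  induction n using Nat.strong_induction_on with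
  | _ n ih =>
    match n with
    | 0 => rw [ha0]; norm_num
    | n + 1 =>
      rw [harec n]
      have h1 : 0 ≤ (δ - 1) * a n := mul_nonneg (by linarith) (ih n (by omega))
      have h2 : 0 ≤ ∑ k ∈ Finset.range (n + 1), a k * a (n - k) :=
        Finset.sum_nonneg fun k hk =>
          mul_nonneg (ih k (by simp at hk; omega)) (ih (n - k) (by omega))
      linarith

lemma partial_sum_le : ∀ N, ∑ k ∈ range N, a k * ((2*δ+2)⁻¹) ^ k ≤ 2 := by
  have hA : (0:ℝ) < 2*δ+2 := by linarith
  have hAi : (0:ℝ) ≤ (2*δ+2)⁻¹ := by positivity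
  set B : ℝ := (2*δ+2)⁻¹ with hB
  have ht : ∀ n, 0 ≤ a n * B ^ n := fun n =>
    mul_nonneg (a_nonneg δ hδ a ha0 harec n) (pow_nonneg hAi n)
  intro N
  induction N with
  | zero => simp
  | succ N ih =>
    have hSnn : 0 ≤ ∑ k ∈ range N, a k * B ^ k := Finset.sum_nonneg fun k _ => ht k
    rw [Finset.sum_range_succ'] 
    -- ∑ i ∈ range N, a (i+1) * B^(i+1) + a 0 * B^0
    have key : ∀ i, a (i+1) * B ^ (i+1)
        = (δ-1) * B * (a i * B ^ i)
          + B * ∑ k ∈ range (i+1), (a k * B ^ k) * (a (i-k) * B ^ (i-k)) := by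
      intro i
      rw [harec i, pow_succ]
      rw [add_mul, Finset.sum_mul, Finset.mul_sum]
      congr 1
      · ring
      · refine Finset.sum_congr rfl fun k hk => ?_
        have hk' : k ≤ i := by simp at hk; omega
        have hpow : B ^ k * B ^ (i - k) = B ^ i := by
          rw [← pow_add, Nat.add_sub_cancel' hk']
        rw [← hpow]; ring
    rw [Finset.sum_congr rfl fun i _ => key i]
    rw [Finset.sum_add_distrib, ← Finset.mul_sum, ← Finset.mul_sum]
    have hconv := conv_sum_le (fun n => a n * B ^ n) ht N
    have hBsmall : (2*δ+2) * B = 1 := mul_inv_cancel₀ (ne_of_gt hA)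
    have hBle : B ≤ 1/4 := by
      rw [hB]
      rw [inv_le_comm₀ (by linarith) (by norm_num)]
      linarith
    have hS2 : (∑ k ∈ range N, a k * B ^ k) ^ 2 ≤ 4 := by nlinarith
    have hd : 0 ≤ δ - 1 := by linarith
    have hBpos : 0 < B := by positivity
    have h1 : (δ-1) * B * (∑ i ∈ range N, a i * B ^ i) ≤ (δ-1) * B * 2 :=
      mul_le_mul_of_nonneg_left ih (by positivity)
    have h2 : B * (∑ i ∈ range N, ∑ k ∈ range (i+1), (a k * B ^ k) * (a (i-k) * B^(i-k)))
        ≤ B * 4 := mul_le_mul_of_nonneg_left (le_trans hconv hS2) (le_of_lt hBpos)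
    have ha0' : a 0 * B ^ 0 = 1 := by rw [ha0]; simp
    rw [ha0']
    nlinarith
end



/-- The moment generating function `Φ(z) = Σ Tr₀(∪ⁿ) zⁿ` of the cup element of a
subfactor planar algebra of index parameter `δ` has the stated closed form, where
the moments `a n = Tr₀(∪ⁿ)` satisfy the recursion of Lemma `lem:MGFcup`. -/
theorem cup_moment_generating_function (δ : ℝ) (hδ : 1 ≤ δ) (a : ℕ → ℝ)
    (ha0 : a 0 = 1)
    (harec : ∀ n : ℕ, a (n + 1) =
      (δ - 1) * a n + ∑ k ∈ Finset.range (n + 1), a k * a (n - k)) :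
    ∃ r : ℝ, 0 < r ∧ ∀ z : ℝ, 0 < z → z < r →
      HasSum (fun n : ℕ => a n * z ^ n)
        (((1 - (δ - 1) * z) / (2 * z)) *
          (1 - Real.sqrt (1 - 4 * z / (1 - (δ - 1) * z) ^ 2))) := by
  have hApos : (0:ℝ) < 2*δ+2 := by linarith
  refine ⟨(16*(2*δ+2))⁻¹, by positivity, fun z hz hzr => ?_⟩
  have hAz : (2*δ+2)*z < 1/16 := by
    have h := mul_lt_mul_of_pos_left hzr hApos
    rw [show (2*δ+2)*(16*(2*δ+2))⁻¹ = 1/16 by field_simp] at h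
    exact h
  have hz64 : z < 1/64 := by nlinarith
  -- bound on a n
  have hbound : ∀ n, a n ≤ 2 * (2*δ+2)^n := by
    intro n
    have h1 : a n * ((2*δ+2)⁻¹)^n ≤ 2 := by
      have := partial_sum_le δ hδ a ha0 harec (n+1)
      have hnn : ∀ k ∈ Finset.range (n+1), 0 ≤ a k * ((2*δ+2)⁻¹)^k := fun k _ =>
        mul_nonneg (a_nonneg δ hδ a ha0 harec k) (by positivity)
      have := Finset.single_le_sum hnn (Finset.self_mem_range_succ n)
      linarith [partial_sum_le δ hδ a ha0 harec (n+1)]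
    have h2 := mul_le_mul_of_nonneg_right h1 (le_of_lt (pow_pos hApos n))
    rw [mul_assoc, ← mul_pow, inv_mul_cancel₀ (ne_of_gt hApos), one_pow, mul_one] at h2
    exact h2
  have hann : ∀ n, 0 ≤ a n := a_nonneg δ hδ a ha0 harec
  have hfnn : ∀ n, 0 ≤ a n * z ^ n := fun n => mul_nonneg (hann n) (pow_nonneg hz.le n)
  have hfle : ∀ n, a n * z ^ n ≤ 2 * ((2*δ+2)*z) ^ n := by
    intro n
    rw [mul_pow]
    calc a n * z ^ n ≤ 2 * (2*δ+2)^n * z^n :=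
          mul_le_mul_of_nonneg_right (hbound n) (pow_nonneg hz.le n)
      _ = 2 * ((2*δ+2)^n * z^n) := by ring
  have hAznn : (0:ℝ) ≤ (2*δ+2)*z := by positivity
  have hAzlt : (2*δ+2)*z < 1 := by linarith
  have hgsum : Summable (fun n : ℕ => 2 * ((2*δ+2)*z) ^ n) :=
    (summable_geometric_of_lt_one hAznn hAzlt).mul_left 2
  have hsum : Summable (fun n : ℕ => a n * z ^ n) :=
    Summable.of_nonneg_of_le hfnn hfle hgsum
  set S : ℝ := ∑' n : ℕ, a n * z ^ n with hSdef
  have hS : HasSum (fun n : ℕ => a n * z ^ n) S := hsum.hasSum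
  -- bound on S
  have hSle : S ≤ 4 := by
    have h1 : S ≤ ∑' n : ℕ, 2 * ((2*δ+2)*z) ^ n := Summable.tsum_le_tsum hfle hsum hgsum
    have h2 : (∑' n : ℕ, ((2*δ+2)*z) ^ n) = (1 - (2*δ+2)*z)⁻¹ :=
      tsum_geometric_of_lt_one hAznn hAzlt
    rw [tsum_mul_left, h2] at h1
    have h3 : (1 - (2*δ+2)*z)⁻¹ ≤ 2 := by
      rw [inv_le_comm₀ (by linarith) (by norm_num)]
      linarith
    linarith
  have hSnn : 0 ≤ S := tsum_nonneg hfnn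
  -- Cauchy product
  have hnorm : Summable (fun n : ℕ => ‖a n * z ^ n‖) := by
    simp only [Real.norm_eq_abs]
    exact summable_abs_iff.mpr hsum
  have hmul := hasSum_sum_range_mul_of_summable_norm hnorm hnorm
  have hconv_eq : ∀ n : ℕ, (∑ k ∈ Finset.range (n+1),
      (a k * z ^ k) * (a (n-k) * z ^ (n-k))) = (a (n+1) - (δ-1)*a n) * z ^ n := by
    intro n
    have h1 : ∀ k ∈ Finset.range (n+1),
        (a k * z ^ k) * (a (n-k) * z ^ (n-k)) = a k * a (n-k) * z ^ n := by
      intro k hk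
      have hk' : k ≤ n := by simp at hk; omega
      have : z ^ k * z ^ (n-k) = z ^ n := by rw [← pow_add, Nat.add_sub_cancel' hk']
      rw [← this]; ring
    rw [Finset.sum_congr rfl h1, ← Finset.sum_mul]
    have h2 : (∑ k ∈ Finset.range (n+1), a k * a (n-k)) = a (n+1) - (δ-1)*a n := by
      rw [harec n]; ring
    rw [h2]
  rw [show (fun n : ℕ => ∑ k ∈ Finset.range (n+1),
      (a k * z ^ k) * (a (n-k) * z ^ (n-k)))
      = fun n : ℕ => (a (n+1) - (δ-1)*a n) * z ^ n from funext hconv_eq] at hmul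
  have hδS : HasSum (fun n : ℕ => (δ-1) * (a n * z ^ n)) ((δ-1)*S) := hS.mul_left _
  have hadd := hmul.add hδS
  rw [show (fun n : ℕ => (a (n+1) - (δ-1)*a n) * z ^ n + (δ-1) * (a n * z ^ n))
      = fun n : ℕ => a (n+1) * z ^ n from funext fun n => by ring] at hadd
  have hmulz := hadd.mul_left z
  rw [show (fun n : ℕ => z * (a (n+1) * z ^ n)) = fun n : ℕ => a (n+1) * z ^ (n+1)
      from funext fun n => by rw [pow_succ]; ring] at hmulz
  have hshift : HasSum (fun n : ℕ => a (n+1) * z ^ (n+1)) (S - 1) := by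
    have := (hasSum_nat_add_iff' (f := fun n : ℕ => a n * z ^ n) 1).mpr hS
    simpa [ha0] using this
  have heq : z * (S * S + (δ-1)*S) = S - 1 := hmulz.unique hshift
  -- solve quadratic
  set Bz : ℝ := 1 - (δ-1)*z with hBzdef
  have hdz : (δ-1)*z < 1/16 := by nlinarith
  have hBzgt : 15/16 < Bz := by rw [hBzdef]; linarith
  have hBzpos : 0 < Bz := by linarith
  have hdisc : 0 < Bz^2 - 4*z := by nlinarith
  set s : ℝ := Real.sqrt (Bz^2 - 4*z) with hsdef
  have hsnn : 0 ≤ s := Real.sqrt_nonneg _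
  have hs2 : s^2 = Bz^2 - 4*z := Real.sq_sqrt hdisc.le
  have hquad : z*S^2 - Bz*S + 1 = 0 := by
    rw [hBzdef]; linear_combination heq
  have hneg : 0 ≤ Bz - 2*z*S := by nlinarith
  have hkey : Bz - 2*z*S = s := by
    have h1 : (Bz - 2*z*S)^2 = Bz^2 - 4*z := by linear_combination (4*z) * hquad
    rw [hsdef, ← h1, Real.sqrt_sq hneg]
  have hSval : S = (Bz - s)/(2*z) := by
    rw [← hkey]
    field_simp
    ring
  -- rewrite target
  have hsqrt : Real.sqrt (1 - 4*z/Bz^2) = s / Bz := by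
    rw [show (1 - 4*z/Bz^2) = (Bz^2 - 4*z)/Bz^2 by field_simp]
    rw [Real.sqrt_div hdisc.le, Real.sqrt_sq hBzpos.le]
  have htarget : (Bz / (2*z)) * (1 - Real.sqrt (1 - 4*z/Bz^2)) = S := by
    rw [hsqrt, hSval]
    field_simp
  rw [htarget]
  exact hS
end

section
/- Let δ be a real number. For n : ℕ let m(n) = Σ over noncrossing partitions π of Fin n of δ^{(number of blocks of π)} (so m(0) = 1, from the empty partition). Then for every n ≥ 1, m(n) = (δ−1)·m(n−1) + Σ_{k=0}^{n−1} m(k)·m(n−1−k). (This identifies the combinatorial moments Σ_{π∈NC(n)} δ^{|π|} of the free Poisson law with rate δ with the paper's recursion for Tr₀(∪^n).) -/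
open scoped Classical

/-- A finite set of blocks is a partition of `Fin n`: blocks are nonempty,
cover everything, and are pairwise disjoint. -/
def IsPartitionOf {n : ℕ} (P : Finset (Finset (Fin n))) : Prop :=
  (∀ B ∈ P, B.Nonempty) ∧
  (∀ i : Fin n, ∃ B ∈ P, i ∈ B) ∧
  (∀ B ∈ P, ∀ B' ∈ P, ∀ i : Fin n, i ∈ B → i ∈ B' → B = B')

/-- Noncrossing: there are no `a < b < c < d` with `a, c` in one block and
`b, d` in a different block. -/
def IsNoncrossing {n : ℕ} (P : Finset (Finset (Fin n))) : Prop :=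
  ¬ ∃ a b c d : Fin n, a < b ∧ b < c ∧ c < d ∧
      ∃ B ∈ P, ∃ B' ∈ P, B ≠ B' ∧ a ∈ B ∧ c ∈ B ∧ b ∈ B' ∧ d ∈ B'

/-- The finite set of noncrossing partitions of `Fin n`. -/
noncomputable def ncPartitions (n : ℕ) : Finset (Finset (Finset (Fin n))) :=
  Finset.univ.filter fun P => IsPartitionOf P ∧ IsNoncrossing P

/-- The `n`-th moment of the free Poisson law of rate `δ`:
`m n = Σ_{π ∈ NC(n)} δ^{|π|}`. -/
noncomputable def ncMoment (δ : ℝ) (n : ℕ) : ℝ :=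
  ∑ P ∈ ncPartitions n, δ ^ P.card

open Finset

def IsNCP (s : Finset ℕ) (P : Finset (Finset ℕ)) : Prop :=
  (∀ B ∈ P, B.Nonempty) ∧ (∀ B ∈ P, B ⊆ s) ∧ (∀ i ∈ s, ∃ B ∈ P, i ∈ B) ∧
  (∀ B ∈ P, ∀ B' ∈ P, ∀ i : ℕ, i ∈ B → i ∈ B' → B = B') ∧
  (¬ ∃ a b c d : ℕ, a < b ∧ b < c ∧ c < d ∧
      ∃ B ∈ P, ∃ B' ∈ P, B ≠ B' ∧ a ∈ B ∧ c ∈ B ∧ b ∈ B' ∧ d ∈ B')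

noncomputable def NCP (s : Finset ℕ) : Finset (Finset (Finset ℕ)) :=
  s.powerset.powerset.filter (IsNCP s)

lemma mem_NCP {s : Finset ℕ} {P : Finset (Finset ℕ)} : P ∈ NCP s ↔ IsNCP s P := by
  simp only [NCP, mem_filter, mem_powerset, and_iff_right_iff_imp]
  intro h B hB
  simpa using h.2.1 B hB

noncomputable def G (δ : ℝ) (s : Finset ℕ) : ℝ := ∑ P ∈ NCP s, δ ^ P.card

lemma NCP_empty : NCP (∅ : Finset ℕ) = {∅} := by
  ext P
  simp only [mem_NCP, IsNCP, mem_singleton]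
  constructor
  · rintro ⟨h1, h2, -, -, -⟩
    by_contra hP
    obtain ⟨B, hB⟩ := Finset.nonempty_iff_ne_empty.2 hP
    obtain ⟨x, hx⟩ := h1 B hB
    exact absurd (h2 B hB hx) (by simp)
  · rintro rfl
    refine ⟨by simp, by simp, by simp, by simp, ?_⟩
    rintro ⟨a, b, c, d, -, -, -, B, hB, -⟩
    simp at hB

lemma G_empty (δ : ℝ) : G δ ∅ = 1 := by simp [G, NCP_empty]

section relabel

variable {f : ℕ → ℕ} {s : Finset ℕ}

lemma lt_of_flt {f : ℕ → ℕ} {s : Finset ℕ} (hf : ∀ x ∈ s, ∀ y ∈ s, x < y → f x < f y)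
    {x y : ℕ} (hx : x ∈ s) (hy : y ∈ s) (h : f x < f y) : x < y := by
  rcases lt_trichotomy x y with h' | h' | h'
  · exact h'
  · subst h'; exact absurd h (lt_irrefl _)
  · exact absurd h (not_lt.2 (le_of_lt (hf y hy x hx h')))

lemma relabel_mem (hf : ∀ x ∈ s, ∀ y ∈ s, x < y → f x < f y)
    {P : Finset (Finset ℕ)} (hP : P ∈ NCP s) :
    P.image (fun B => B.image f) ∈ NCP (s.image f) := by
  rw [mem_NCP] at hP ⊢
  obtain ⟨h1, h2, h3, h4, h5⟩ := hP
  have hinj : ∀ x ∈ s, ∀ y ∈ s, f x = f y → x = y := by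
    intro x hx y hy hxy
    rcases lt_trichotomy x y with h | h | h
    · exact absurd (hf x hx y hy h) (by omega)
    · exact h
    · exact absurd (hf y hy x hx h) (by omega)
  refine ⟨?_, ?_, ?_, ?_, ?_⟩
  · rintro C hC
    obtain ⟨B, hB, rfl⟩ := mem_image.1 hC
    exact (h1 B hB).image f
  · rintro C hC
    obtain ⟨B, hB, rfl⟩ := mem_image.1 hC
    exact image_subset_image (h2 B hB)
  · intro i hi
    obtain ⟨x, hx, rfl⟩ := mem_image.1 hi
    obtain ⟨B, hB, hxB⟩ := h3 x hx
    exact ⟨B.image f, mem_image_of_mem _ hB, mem_image_of_mem f hxB⟩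
  · rintro C hC C' hC' i hiC hiC'
    obtain ⟨B, hB, rfl⟩ := mem_image.1 hC
    obtain ⟨B', hB', rfl⟩ := mem_image.1 hC'
    obtain ⟨x, hxB, rfl⟩ := mem_image.1 hiC
    obtain ⟨y, hyB, hxy⟩ := mem_image.1 hiC'
    have : y = x := hinj y (h2 B' hB' hyB) x (h2 B hB hxB) hxy
    subst this
    rw [h4 B hB B' hB' y hxB hyB]
  · rintro ⟨a, b, c, d, hab, hbc, hcd, C, hC, C', hC', hne, haC, hcC, hbC', hdC'⟩
    obtain ⟨B, hB, rfl⟩ := mem_image.1 hC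
    obtain ⟨B', hB', rfl⟩ := mem_image.1 hC'
    obtain ⟨a', ha'B, rfl⟩ := mem_image.1 haC
    obtain ⟨c', hc'B, rfl⟩ := mem_image.1 hcC
    obtain ⟨b', hb'B, rfl⟩ := mem_image.1 hbC'
    obtain ⟨d', hd'B, rfl⟩ := mem_image.1 hdC'
    have hsa := h2 B hB ha'B
    have hsc := h2 B hB hc'B
    have hsb := h2 B' hB' hb'B
    have hsd := h2 B' hB' hd'B
    have hab' : a' < b' := lt_of_flt hf hsa hsb hab
    have hbc' : b' < c' := lt_of_flt hf hsb hsc hbc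
    have hcd' : c' < d' := lt_of_flt hf hsc hsd hcd
    have hBne : B ≠ B' := by rintro rfl; exact hne rfl
    exact h5 ⟨a', b', c', d', hab', hbc', hcd', B, hB, B', hB', hBne, ha'B, hc'B, hb'B, hd'B⟩

lemma relabel_injOn (hf : ∀ x ∈ s, ∀ y ∈ s, f x = f y → x = y)
    {B B' : Finset ℕ} (hB : B ⊆ s) (hB' : B' ⊆ s)
    (h : B.image f = B'.image f) : B = B' := by
  ext x
  constructor
  · intro hx
    have : f x ∈ B'.image f := h ▸ mem_image_of_mem f hx
    obtain ⟨y, hy, hyx⟩ := mem_image.1 this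
    rwa [hf y (hB' hy) x (hB hx) hyx] at hy
  · intro hx
    have : f x ∈ B.image f := h.symm ▸ mem_image_of_mem f hx
    obtain ⟨y, hy, hyx⟩ := mem_image.1 this
    rwa [hf y (hB hy) x (hB' hx) hyx] at hy

lemma G_image (hf : ∀ x ∈ s, ∀ y ∈ s, x < y → f x < f y) :
    G δ (s.image f) = G δ s := by
  have hinj : ∀ x ∈ s, ∀ y ∈ s, f x = f y → x = y := by
    intro x hx y hy hxy
    rcases lt_trichotomy x y with h | h | h
    · exact absurd (hf x hx y hy h) (by omega)
    · exact h
    · exact absurd (hf y hy x hx h) (by omega)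
  unfold G
  symm
  refine Finset.sum_bij (fun P _ => P.image (fun B => B.image f))
    (fun P hP => relabel_mem hf hP) ?_ ?_ ?_
  · intro P hP Q hQ h
    replace h : P.image (fun B => B.image f) = Q.image (fun B => B.image f) := h
    have hPs := (mem_NCP.1 hP).2.1
    have hQs := (mem_NCP.1 hQ).2.1
    ext B
    constructor
    · intro hB
      have : B.image f ∈ Q.image (fun B => B.image f) := h ▸ mem_image_of_mem _ hB
      obtain ⟨B', hB', hBB'⟩ := mem_image.1 this
      rwa [relabel_injOn hinj (hQs B' hB') (hPs B hB) hBB'] at hB'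
    · intro hB
      have : B.image f ∈ P.image (fun B => B.image f) := h.symm ▸ mem_image_of_mem _ hB
      obtain ⟨B', hB', hBB'⟩ := mem_image.1 this
      rwa [relabel_injOn hinj (hPs B' hB') (hQs B hB) hBB'] at hB'
  · intro Q hQ
    obtain ⟨h1, h2, h3, h4, h5⟩ := mem_NCP.1 hQ
    refine ⟨Q.image (fun C => s.filter (fun x => f x ∈ C)), ?_, ?_⟩
    · rw [mem_NCP]
      refine ⟨?_, ?_, ?_, ?_, ?_⟩
      · rintro B hB
        obtain ⟨C, hC, rfl⟩ := mem_image.1 hB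
        obtain ⟨c, hc⟩ := h1 C hC
        obtain ⟨x, hx, rfl⟩ := mem_image.1 (h2 C hC hc)
        exact ⟨x, mem_filter.2 ⟨hx, hc⟩⟩
      · rintro B hB
        obtain ⟨C, hC, rfl⟩ := mem_image.1 hB
        exact filter_subset _ _
      · intro x hx
        obtain ⟨C, hC, hxC⟩ := h3 (f x) (mem_image_of_mem f hx)
        exact ⟨s.filter (fun y => f y ∈ C), mem_image_of_mem _ hC, mem_filter.2 ⟨hx, hxC⟩⟩
      · rintro B hB B' hB' i hiB hiB'
        obtain ⟨C, hC, rfl⟩ := mem_image.1 hB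
        obtain ⟨C', hC', rfl⟩ := mem_image.1 hB'
        rw [h4 C hC C' hC' (f i) (mem_filter.1 hiB).2 (mem_filter.1 hiB').2]
      · rintro ⟨a, b, c, d, hab, hbc, hcd, B, hB, B', hB', hne, haB, hcB, hbB', hdB'⟩
        obtain ⟨C, hC, rfl⟩ := mem_image.1 hB
        obtain ⟨C', hC', rfl⟩ := mem_image.1 hB'
        have hCne : C ≠ C' := by rintro rfl; exact hne rfl
        rw [mem_filter] at haB hcB hbB' hdB'
        exact h5 ⟨f a, f b, f c, f d, hf a haB.1 b hbB'.1 hab, hf b hbB'.1 c hcB.1 hbc,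
          hf c hcB.1 d hdB'.1 hcd, C, hC, C', hC', hCne, haB.2, hcB.2, hbB'.2, hdB'.2⟩
    · show Finset.image (fun B => B.image f) (Q.image (fun C => s.filter (fun x => f x ∈ C))) = Q
      rw [image_image]
      have : ∀ C ∈ Q, (s.filter (fun x => f x ∈ C)).image f = C := by
        intro C hC
        ext c
        simp only [mem_image, mem_filter]
        constructor
        · rintro ⟨x, ⟨-, hx⟩, rfl⟩; exact hx
        · intro hc
          obtain ⟨x, hx, rfl⟩ := mem_image.1 (h2 C hC hc)
          exact ⟨x, ⟨hx, hc⟩, rfl⟩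
      calc Q.image (fun C => (s.filter (fun x => f x ∈ C)).image f)
          = Q.image id := Finset.image_congr (fun C hC => this C hC)
        _ = Q := image_id
  · intro P hP
    have hPs := (mem_NCP.1 hP).2.1
    rw [Finset.card_image_of_injOn]
    intro B hB B' hB' h
    exact relabel_injOn hinj (hPs B (by simpa using hB)) (hPs B' (by simpa using hB')) h

end relabel

lemma val_image_mem {n : ℕ} {P : Finset (Finset (Fin n))} (hP : P ∈ ncPartitions n) :
    P.image (fun B => B.image Fin.val) ∈ NCP (Finset.range n) := by
  rw [ncPartitions, mem_filter] at hP
  obtain ⟨-, ⟨h1, h3, h4⟩, h5⟩ := hP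
  rw [mem_NCP]
  refine ⟨?_, ?_, ?_, ?_, ?_⟩
  · rintro C hC
    obtain ⟨B, hB, rfl⟩ := mem_image.1 hC
    exact (h1 B hB).image _
  · rintro C hC
    obtain ⟨B, hB, rfl⟩ := mem_image.1 hC
    intro x hx
    obtain ⟨i, -, rfl⟩ := mem_image.1 hx
    simp [i.isLt]
  · intro i hi
    obtain ⟨B, hB, hiB⟩ := h3 ⟨i, mem_range.1 hi⟩
    exact ⟨B.image Fin.val, mem_image_of_mem _ hB, mem_image_of_mem _ hiB⟩
  · rintro C hC C' hC' i hiC hiC'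
    obtain ⟨B, hB, rfl⟩ := mem_image.1 hC
    obtain ⟨B', hB', rfl⟩ := mem_image.1 hC'
    obtain ⟨x, hxB, rfl⟩ := mem_image.1 hiC
    obtain ⟨y, hyB, hxy⟩ := mem_image.1 hiC'
    have : y = x := Fin.val_injective hxy
    subst this
    rw [h4 B hB B' hB' y hxB hyB]
  · rintro ⟨a, b, c, d, hab, hbc, hcd, C, hC, C', hC', hne, haC, hcC, hbC', hdC'⟩
    obtain ⟨B, hB, rfl⟩ := mem_image.1 hC
    obtain ⟨B', hB', rfl⟩ := mem_image.1 hC'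
    obtain ⟨a', ha'B, rfl⟩ := mem_image.1 haC
    obtain ⟨c', hc'B, rfl⟩ := mem_image.1 hcC
    obtain ⟨b', hb'B, rfl⟩ := mem_image.1 hbC'
    obtain ⟨d', hd'B, rfl⟩ := mem_image.1 hdC'
    have hBne : B ≠ B' := by rintro rfl; exact hne rfl
    exact h5 ⟨a', b', c', d', hab, hbc, hcd, B, hB, B', hB', hBne, ha'B, hc'B, hb'B, hd'B⟩

lemma val_image_injOn {n : ℕ} {B B' : Finset (Fin n)}
    (h : B.image Fin.val = B'.image Fin.val) : B = B' := by
  ext x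
  constructor
  · intro hx
    have : (x : ℕ) ∈ B'.image Fin.val := h ▸ mem_image_of_mem _ hx
    obtain ⟨y, hy, hyx⟩ := mem_image.1 this
    rwa [Fin.val_injective hyx] at hy
  · intro hx
    have : (x : ℕ) ∈ B.image Fin.val := h.symm ▸ mem_image_of_mem _ hx
    obtain ⟨y, hy, hyx⟩ := mem_image.1 this
    rwa [Fin.val_injective hyx] at hy

lemma ncMoment_eq_G (δ : ℝ) (n : ℕ) : ncMoment δ n = G δ (Finset.range n) := by
  unfold ncMoment G
  refine Finset.sum_bij (fun P _ => P.image (fun B => B.image Fin.val))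
    (fun P hP => val_image_mem hP) ?_ ?_ ?_
  · intro P hP Q hQ h
    replace h : P.image (fun B => B.image Fin.val) = Q.image (fun B => B.image Fin.val) := h
    ext B
    constructor
    · intro hB
      have : B.image Fin.val ∈ Q.image (fun B => B.image Fin.val) :=
        h ▸ mem_image_of_mem _ hB
      obtain ⟨B', hB', hBB'⟩ := mem_image.1 this
      rwa [val_image_injOn hBB'] at hB'
    · intro hB
      have : B.image Fin.val ∈ P.image (fun B => B.image Fin.val) :=
        h.symm ▸ mem_image_of_mem _ hB
      obtain ⟨B', hB', hBB'⟩ := mem_image.1 this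
      rwa [val_image_injOn hBB'] at hB'
  · intro Q hQ
    obtain ⟨h1, h2, h3, h4, h5⟩ := mem_NCP.1 hQ
    have hlt : ∀ C ∈ Q, ∀ x ∈ C, x < n := fun C hC x hx => mem_range.1 (h2 C hC hx)
    refine ⟨Q.image (fun C => Finset.univ.filter (fun i : Fin n => (i : ℕ) ∈ C)), ?_, ?_⟩
    · rw [ncPartitions, mem_filter]
      refine ⟨mem_univ _, ⟨?_, ?_, ?_⟩, ?_⟩
      · rintro B hB
        obtain ⟨C, hC, rfl⟩ := mem_image.1 hB
        obtain ⟨c, hc⟩ := h1 C hC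
        exact ⟨⟨c, hlt C hC c hc⟩, by simpa using hc⟩
      · intro i
        obtain ⟨C, hC, hiC⟩ := h3 (i : ℕ) (mem_range.2 i.isLt)
        exact ⟨_, mem_image_of_mem _ hC, by simpa using hiC⟩
      · rintro B hB B' hB' i hiB hiB'
        obtain ⟨C, hC, rfl⟩ := mem_image.1 hB
        obtain ⟨C', hC', rfl⟩ := mem_image.1 hB'
        rw [mem_filter] at hiB hiB'
        rw [h4 C hC C' hC' (i : ℕ) hiB.2 hiB'.2]
      · rintro ⟨a, b, c, d, hab, hbc, hcd, B, hB, B', hB', hne, haB, hcB, hbB', hdB'⟩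
        obtain ⟨C, hC, rfl⟩ := mem_image.1 hB
        obtain ⟨C', hC', rfl⟩ := mem_image.1 hB'
        have hCne : C ≠ C' := by rintro rfl; exact hne rfl
        rw [mem_filter] at haB hcB hbB' hdB'
        exact h5 ⟨a, b, c, d, hab, hbc, hcd, C, hC, C', hC', hCne,
          haB.2, hcB.2, hbB'.2, hdB'.2⟩
    · show Finset.image (fun B => Finset.image Fin.val B)
        (Q.image (fun C => Finset.univ.filter (fun i : Fin n => (i : ℕ) ∈ C))) = Q
      rw [image_image]
      have : ∀ C ∈ Q, (Finset.univ.filter (fun i : Fin n => (i : ℕ) ∈ C)).image Fin.val = C := by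
        intro C hC
        ext c
        simp only [mem_image, mem_filter, mem_univ, true_and]
        constructor
        · rintro ⟨x, hx, rfl⟩; exact hx
        · intro hc
          exact ⟨⟨c, hlt C hC c hc⟩, hc, rfl⟩
      calc Q.image (fun C => (Finset.univ.filter (fun i : Fin n => (i : ℕ) ∈ C)).image Fin.val)
          = Q.image id := Finset.image_congr (fun C hC => this C hC)
        _ = Q := image_id
  · intro P hP
    rw [Finset.card_image_of_injOn (fun B _ B' _ h => val_image_injOn h)]

lemma G_Ico (δ : ℝ) (a b : ℕ) : G δ (Finset.Ico a b) = G δ (Finset.range (b - a)) := by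
  have h : Finset.Ico a b = (Finset.range (b - a)).image (· + a) := by
    ext x
    simp only [mem_Ico, mem_image, mem_range]
    constructor
    · intro ⟨h1, h2⟩; exact ⟨x - a, by omega, by omega⟩
    · rintro ⟨y, hy, rfl⟩; omega
  rw [h, G_image]
  intro x _ y _ hxy
  omega

lemma ncMoment_zero (δ : ℝ) : ncMoment δ 0 = 1 := by
  rw [ncMoment_eq_G]
  simpa using G_empty δ

section mainA

variable {N : ℕ} {δ : ℝ}

lemma erase_singleton_mem {P : Finset (Finset ℕ)} (hP : P ∈ NCP (Finset.range (N + 1)))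
    (hN : {N} ∈ P) : P.erase {N} ∈ NCP (Finset.range N) := by
  obtain ⟨h1, h2, h3, h4, h5⟩ := mem_NCP.1 hP
  have hkey : ∀ B ∈ P, B ≠ {N} → N ∉ B := by
    intro B hB hBne hNB
    exact hBne (h4 B hB {N} hN N hNB (mem_singleton_self N))
  rw [mem_NCP]
  refine ⟨?_, ?_, ?_, ?_, ?_⟩
  · intro B hB; exact h1 B (mem_of_mem_erase hB)
  · intro B hB x hx
    rw [mem_erase] at hB
    have := h2 B hB.2 hx
    rw [mem_range] at this ⊢
    have : x ≠ N := fun h => hkey B hB.2 hB.1 (h ▸ hx)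
    omega
  · intro i hi
    rw [mem_range] at hi
    obtain ⟨B, hB, hiB⟩ := h3 i (by simp; omega)
    refine ⟨B, mem_erase.2 ⟨?_, hB⟩, hiB⟩
    rintro rfl
    rw [mem_singleton] at hiB
    omega
  · intro B hB B' hB' i hiB hiB'
    exact h4 B (mem_of_mem_erase hB) B' (mem_of_mem_erase hB') i hiB hiB'
  · rintro ⟨a, b, c, d, hab, hbc, hcd, B, hB, B', hB', hne, haB, hcB, hbB', hdB'⟩
    exact h5 ⟨a, b, c, d, hab, hbc, hcd, B, mem_of_mem_erase hB, B', mem_of_mem_erase hB',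
      hne, haB, hcB, hbB', hdB'⟩

lemma insert_singleton_mem {Q : Finset (Finset ℕ)} (hQ : Q ∈ NCP (Finset.range N)) :
    insert ({N} : Finset ℕ) Q ∈ NCP (Finset.range (N + 1)) := by
  obtain ⟨h1, h2, h3, h4, h5⟩ := mem_NCP.1 hQ
  have hNnot : ∀ B ∈ Q, N ∉ B := by
    intro B hB hNB
    have := h2 B hB hNB
    simp at this
  rw [mem_NCP]
  refine ⟨?_, ?_, ?_, ?_, ?_⟩
  · intro B hB
    rcases mem_insert.1 hB with rfl | hB
    · exact ⟨N, mem_singleton_self N⟩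
    · exact h1 B hB
  · intro B hB x hx
    rcases mem_insert.1 hB with rfl | hB
    · rw [mem_singleton] at hx; simp [hx]
    · have := h2 B hB hx; rw [mem_range] at this ⊢; omega
  · intro i hi
    rw [mem_range] at hi
    rcases Nat.lt_succ_iff_lt_or_eq.1 hi with hi | rfl
    · obtain ⟨B, hB, hiB⟩ := h3 i (mem_range.2 hi)
      exact ⟨B, mem_insert_of_mem hB, hiB⟩
    · exact ⟨{i}, mem_insert_self _ _, mem_singleton_self i⟩
  · intro B hB B' hB' i hiB hiB'
    rcases mem_insert.1 hB with rfl | hB <;> rcases mem_insert.1 hB' with rfl | hB'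
    · rfl
    · rw [mem_singleton] at hiB; exact absurd (hiB ▸ hiB') (hNnot B' hB')
    · rw [mem_singleton] at hiB'; exact absurd (hiB' ▸ hiB) (hNnot B hB)
    · exact h4 B hB B' hB' i hiB hiB'
  · rintro ⟨a, b, c, d, hab, hbc, hcd, B, hB, B', hB', hne, haB, hcB, hbB', hdB'⟩
    rcases mem_insert.1 hB with rfl | hB
    · rw [mem_singleton] at haB hcB; omega
    · rcases mem_insert.1 hB' with rfl | hB'
      · rw [mem_singleton] at hbB' hdB'; omega
      · exact h5 ⟨a, b, c, d, hab, hbc, hcd, B, hB, B', hB', hne, haB, hcB, hbB', hdB'⟩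

lemma sum_partA :
    ∑ P ∈ (NCP (Finset.range (N + 1))).filter (fun P => {N} ∈ P), δ ^ P.card
      = δ * G δ (Finset.range N) := by
  rw [G, Finset.mul_sum]
  refine Finset.sum_bij (fun P _ => P.erase {N}) ?_ ?_ ?_ ?_
  · intro P hP
    rw [mem_filter] at hP
    exact erase_singleton_mem hP.1 hP.2
  · intro P hP Q hQ h
    replace h : P.erase {N} = Q.erase {N} := h
    rw [mem_filter] at hP hQ
    rw [← insert_erase hP.2, h, insert_erase hQ.2]
  · intro Q hQ
    have hmem : ({N} : Finset ℕ) ∉ Q := by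
      intro h
      have := (mem_NCP.1 hQ).2.1 {N} h (mem_singleton_self N)
      simp at this
    refine ⟨insert {N} Q, mem_filter.2 ⟨insert_singleton_mem hQ, mem_insert_self _ _⟩, ?_⟩
    exact erase_insert hmem
  · intro P hP
    rw [mem_filter] at hP
    rw [Finset.card_erase_of_mem hP.2]
    have : 1 ≤ P.card := card_pos.2 ⟨{N}, hP.2⟩
    rw [← pow_succ']
    congr 1
    omega

end mainA

noncomputable def blockOf (P : Finset (Finset ℕ)) (i : ℕ) : Finset ℕ :=
  (P.filter (fun B => i ∈ B)).sup id

lemma blockOf_eq {P : Finset (Finset ℕ)}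
    (h4 : ∀ B ∈ P, ∀ B' ∈ P, ∀ i : ℕ, i ∈ B → i ∈ B' → B = B')
    {B : Finset ℕ} {i : ℕ} (hB : B ∈ P) (hiB : i ∈ B) : blockOf P i = B := by
  unfold blockOf
  have : P.filter (fun C => i ∈ C) = {B} := by
    ext C
    simp only [mem_filter, mem_singleton]
    constructor
    · rintro ⟨hC, hiC⟩; exact h4 C hC B hB i hiC hiB
    · rintro rfl; exact ⟨hB, hiB⟩
  rw [this, Finset.sup_singleton]
  rfl

section mainC

variable {N : ℕ} {δ : ℝ}

noncomputable def jN (N : ℕ) (P : Finset (Finset ℕ)) : ℕ :=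
  ((blockOf P N).erase N).sup id

noncomputable def midP (N : ℕ) (P : Finset (Finset ℕ)) : Finset (Finset ℕ) :=
  P.filter (fun B => B ⊆ Finset.Ico (jN N P + 1) N)

noncomputable def lowP (N : ℕ) (P : Finset (Finset ℕ)) : Finset (Finset ℕ) :=
  (P.filter (fun B => ¬ B ⊆ Finset.Ico (jN N P + 1) N)).image (fun B => B.erase N)

/-- Bundle of structural facts for a partition of `range (N+1)` where `N` is
not a singleton block. -/
lemma struct {P : Finset (Finset ℕ)} (hP : P ∈ NCP (Finset.range (N + 1)))
    (hN : {N} ∉ P) :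
    blockOf P N ∈ P ∧ N ∈ blockOf P N ∧ jN N P ∈ blockOf P N ∧ jN N P < N ∧
    (∀ x ∈ blockOf P N, x ≠ N → x ≤ jN N P) ∧
    (∀ B ∈ P, B ≠ blockOf P N → (∀ x ∈ B, x ≤ jN N P) ∨
      B ⊆ Finset.Ico (jN N P + 1) N) := by
  obtain ⟨h1, h2, h3, h4, h5⟩ := mem_NCP.1 hP
  obtain ⟨B₀, hB₀, hNB₀⟩ := h3 N (by simp)
  have hBN : blockOf P N = B₀ := blockOf_eq h4 hB₀ hNB₀
  have hmemP : blockOf P N ∈ P := hBN ▸ hB₀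
  have hNmem : N ∈ blockOf P N := hBN ▸ hNB₀
  have hne : ((blockOf P N).erase N).Nonempty := by
    by_contra h
    rw [Finset.not_nonempty_iff_eq_empty] at h
    apply hN
    have : blockOf P N = {N} := by
      ext x
      simp only [mem_singleton]
      constructor
      · intro hx
        by_contra hxN
        exact absurd (mem_erase.2 ⟨hxN, hx⟩) (by simp [h])
      · rintro rfl; exact hNmem
    exact this ▸ hmemP
  obtain ⟨jj, hjj, hjeq⟩ := Finset.exists_mem_eq_sup _ hne id
  have hjmem : jN N P ∈ (blockOf P N).erase N := by rw [jN, hjeq]; exact hjj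
  have hjle : ∀ x ∈ blockOf P N, x ≠ N → x ≤ jN N P := by
    intro x hx hxN
    exact Finset.le_sup (f := id) (mem_erase.2 ⟨hxN, hx⟩)
  have hjB : jN N P ∈ blockOf P N := mem_of_mem_erase hjmem
  have hjN : jN N P ≠ N := (mem_erase.1 hjmem).1
  have hjlt : jN N P < N := by
    have := h2 _ hmemP hjB
    rw [mem_range] at this
    omega
  refine ⟨hmemP, hNmem, hjB, hjlt, hjle, ?_⟩
  intro B hB hBne
  have hNnotB : N ∉ B := fun h => hBne (h4 B hB _ hmemP N h hNmem)
  have hBsub : ∀ x ∈ B, x < N := by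
    intro x hx
    have := h2 B hB hx
    rw [mem_range] at this
    have : x ≠ N := fun h => hNnotB (h ▸ hx)
    omega
  by_cases hall : ∀ x ∈ B, x ≤ jN N P
  · exact Or.inl hall
  · right
    push_neg at hall
    obtain ⟨y, hyB, hyj⟩ := hall
    intro x hx
    rw [mem_Ico]
    refine ⟨?_, hBsub x hx⟩
    by_contra hxle
    push_neg at hxle
    have hxj : x ≤ jN N P := by omega
    have hxnej : x ≠ jN N P := fun hh =>
      hBne (h4 B hB _ hmemP x hx (by rw [hh]; exact hjB))
    exact h5 ⟨x, jN N P, y, N, by omega, by omega, hBsub y hyB, B, hB, blockOf P N, hmemP,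
      hBne, hx, hyB, hjB, hNmem⟩

end mainC

section mainC2

variable {N : ℕ} {δ : ℝ} {P : Finset (Finset ℕ)}

lemma low_block_cases (hP : P ∈ NCP (Finset.range (N + 1))) (hN : {N} ∉ P)
    {B : Finset ℕ} (hB : B ∈ P) (hBni : ¬ B ⊆ Finset.Ico (jN N P + 1) N) :
    (B.erase N).Nonempty ∧ B.erase N ⊆ Finset.range (jN N P + 1) := by
  obtain ⟨hmemP, hNmem, hjB, hjlt, hjle, htri⟩ := struct hP hN
  by_cases hBN : B = blockOf P N
  · subst hBN
    constructor
    · exact ⟨jN N P, mem_erase.2 ⟨by omega, hjB⟩⟩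
    · intro x hx
      rw [mem_erase] at hx
      rw [mem_range]
      have := hjle x hx.2 hx.1
      omega
  · rcases htri B hB hBN with hlow | hmid
    · have hNB : N ∉ B := fun h => absurd (hlow N h) (by omega)
      rw [Finset.erase_eq_of_notMem hNB]
      refine ⟨(mem_NCP.1 hP).1 B hB, ?_⟩
      intro x hx
      rw [mem_range]
      exact Nat.lt_succ_of_le (hlow x hx)
    · exact absurd hmid hBni

lemma lowP_mem (hP : P ∈ NCP (Finset.range (N + 1))) (hN : {N} ∉ P) :
    lowP N P ∈ NCP (Finset.range (jN N P + 1)) := by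
  obtain ⟨h1, h2, h3, h4, h5⟩ := mem_NCP.1 hP
  obtain ⟨hmemP, hNmem, hjB, hjlt, hjle, htri⟩ := struct hP hN
  rw [mem_NCP]
  refine ⟨?_, ?_, ?_, ?_, ?_⟩
  · rintro C hC
    obtain ⟨B, hB, rfl⟩ := mem_image.1 hC
    rw [mem_filter] at hB
    exact (low_block_cases hP hN hB.1 hB.2).1
  · rintro C hC
    obtain ⟨B, hB, rfl⟩ := mem_image.1 hC
    rw [mem_filter] at hB
    exact (low_block_cases hP hN hB.1 hB.2).2
  · intro i hi
    rw [mem_range] at hi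
    obtain ⟨B, hB, hiB⟩ := h3 i (by rw [mem_range]; omega)
    have hBni : ¬ B ⊆ Finset.Ico (jN N P + 1) N := by
      intro h
      have := h hiB
      rw [mem_Ico] at this
      omega
    refine ⟨B.erase N, mem_image_of_mem _ (mem_filter.2 ⟨hB, hBni⟩),
      mem_erase.2 ⟨by omega, hiB⟩⟩
  · rintro C hC C' hC' i hiC hiC'
    obtain ⟨B, hB, rfl⟩ := mem_image.1 hC
    obtain ⟨B', hB', rfl⟩ := mem_image.1 hC'
    rw [mem_filter] at hB hB'
    rw [mem_erase] at hiC hiC'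
    rw [h4 B hB.1 B' hB'.1 i hiC.2 hiC'.2]
  · rintro ⟨a, b, c, d, hab, hbc, hcd, C, hC, C', hC', hne, haC, hcC, hbC', hdC'⟩
    obtain ⟨B, hB, rfl⟩ := mem_image.1 hC
    obtain ⟨B', hB', rfl⟩ := mem_image.1 hC'
    rw [mem_filter] at hB hB'
    have hBne : B ≠ B' := by rintro rfl; exact hne rfl
    exact h5 ⟨a, b, c, d, hab, hbc, hcd, B, hB.1, B', hB'.1, hBne,
      mem_of_mem_erase haC, mem_of_mem_erase hcC,
      mem_of_mem_erase hbC', mem_of_mem_erase hdC'⟩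

lemma midP_mem (hP : P ∈ NCP (Finset.range (N + 1))) (hN : {N} ∉ P) :
    midP N P ∈ NCP (Finset.Ico (jN N P + 1) N) := by
  obtain ⟨h1, h2, h3, h4, h5⟩ := mem_NCP.1 hP
  obtain ⟨hmemP, hNmem, hjB, hjlt, hjle, htri⟩ := struct hP hN
  rw [mem_NCP]
  refine ⟨?_, ?_, ?_, ?_, ?_⟩
  · rintro B hB
    rw [midP, mem_filter] at hB
    exact h1 B hB.1
  · rintro B hB
    rw [midP, mem_filter] at hB
    exact hB.2
  · intro i hi
    rw [mem_Ico] at hi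
    obtain ⟨B, hB, hiB⟩ := h3 i (by rw [mem_range]; omega)
    have hBne : B ≠ blockOf P N := by
      rintro rfl
      have := hjle i hiB (by omega)
      omega
    rcases htri B hB hBne with hlow | hmid
    · exact absurd (hlow i hiB) (by omega)
    · exact ⟨B, mem_filter.2 ⟨hB, hmid⟩, hiB⟩
  · rintro B hB B' hB' i hiB hiB'
    rw [midP, mem_filter] at hB hB'
    exact h4 B hB.1 B' hB'.1 i hiB hiB'
  · rintro ⟨a, b, c, d, hab, hbc, hcd, B, hB, B', hB', hne, haB, hcB, hbB', hdB'⟩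
    rw [midP, mem_filter] at hB hB'
    exact h5 ⟨a, b, c, d, hab, hbc, hcd, B, hB.1, B', hB'.1, hne, haB, hcB, hbB', hdB'⟩

lemma card_eq_low_add_mid (hP : P ∈ NCP (Finset.range (N + 1))) (hN : {N} ∉ P) :
    P.card = (lowP N P).card + (midP N P).card := by
  obtain ⟨h1, h2, h3, h4, h5⟩ := mem_NCP.1 hP
  have hinj : ∀ B ∈ P.filter (fun B => ¬ B ⊆ Finset.Ico (jN N P + 1) N),
      ∀ B' ∈ P.filter (fun B => ¬ B ⊆ Finset.Ico (jN N P + 1) N),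
      B.erase N = B'.erase N → B = B' := by
    intro B hB B' hB' h
    rw [mem_filter] at hB hB'
    obtain ⟨i, hi⟩ := (low_block_cases hP hN hB.1 hB.2).1
    have hi' : i ∈ B'.erase N := h ▸ hi
    rw [mem_erase] at hi hi'
    exact h4 B hB.1 B' hB'.1 i hi.2 hi'.2
  rw [lowP, Finset.card_image_of_injOn hinj, midP]
  have := Finset.card_filter_add_card_filter_not
    (s := P) (p := fun B => B ⊆ Finset.Ico (jN N P + 1) N)
  omega

end mainC2

noncomputable def glueP (N j : ℕ) (π₁ π₂ : Finset (Finset ℕ)) : Finset (Finset ℕ) :=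
  insert (insert N (blockOf π₁ j)) ((π₁.erase (blockOf π₁ j)) ∪ π₂)

section glue

variable {N j : ℕ} {π₁ π₂ : Finset (Finset ℕ)}

lemma glue_mem (hj : j < N) (h₁ : π₁ ∈ NCP (Finset.range (j + 1)))
    (h₂ : π₂ ∈ NCP (Finset.Ico (j + 1) N)) :
    glueP N j π₁ π₂ ∈ NCP (Finset.range (N + 1)) := by
  obtain ⟨g1, g2, g3, g4, g5⟩ := mem_NCP.1 h₁
  obtain ⟨k1, k2, k3, k4, k5⟩ := mem_NCP.1 h₂
  obtain ⟨B₀, hB₀, hjB₀⟩ := g3 j (by simp)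
  have hB₁ : blockOf π₁ j = B₀ := blockOf_eq g4 hB₀ hjB₀
  set B₁ := blockOf π₁ j with hB₁def
  have hB₁π : B₁ ∈ π₁ := hB₁ ▸ hB₀
  have hjB₁ : j ∈ B₁ := hB₁ ▸ hjB₀
  have hg2 : ∀ B ∈ π₁, ∀ x ∈ B, x ≤ j := by
    intro B hB x hx
    have := g2 B hB hx
    rw [mem_range] at this
    omega
  have hk2 : ∀ B ∈ π₂, ∀ x ∈ B, j < x ∧ x < N := by
    intro B hB x hx
    have := k2 B hB hx
    rw [mem_Ico] at this
    omega
  rw [mem_NCP]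
  refine ⟨?_, ?_, ?_, ?_, ?_⟩
  · intro B hB
    rcases mem_insert.1 hB with rfl | hB
    · exact ⟨N, mem_insert_self _ _⟩
    · rcases mem_union.1 hB with hB | hB
      · exact g1 B (mem_of_mem_erase hB)
      · exact k1 B hB
  · intro B hB x hx
    rw [mem_range]
    rcases mem_insert.1 hB with rfl | hB
    · rcases mem_insert.1 hx with h | hx
      · omega
      · have := hg2 B₁ hB₁π x hx; omega
    · rcases mem_union.1 hB with hB | hB
      · have := hg2 B (mem_of_mem_erase hB) x hx; omega
      · have := hk2 B hB x hx; omega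
  · intro i hi
    rw [mem_range] at hi
    rcases Nat.lt_or_ge i (j + 1) with hij | hij
    · obtain ⟨B, hB, hiB⟩ := g3 i (mem_range.2 hij)
      by_cases hBB : B = B₁
      · exact ⟨insert N B₁, mem_insert_self _ _, mem_insert_of_mem (hBB ▸ hiB)⟩
      · exact ⟨B, mem_insert_of_mem (mem_union_left _ (mem_erase.2 ⟨hBB, hB⟩)), hiB⟩
    · rcases Nat.lt_or_ge i N with hiN | hiN
      · obtain ⟨B, hB, hiB⟩ := k3 i (mem_Ico.2 ⟨hij, hiN⟩)
        exact ⟨B, mem_insert_of_mem (mem_union_right _ hB), hiB⟩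
      · have hiN' : i = N := by omega
        exact ⟨insert N B₁, mem_insert_self _ _, by rw [hiN']; exact mem_insert_self _ _⟩
  · intro B hB B' hB' i hiB hiB'
    have key : ∀ C ∈ (π₁.erase B₁) ∪ π₂, ∀ i : ℕ, i ∈ C → i ∈ insert N B₁ → False := by
      intro C hC i hiC hstar
      rcases mem_union.1 hC with hC | hC
      · rw [mem_erase] at hC
        rcases mem_insert.1 hstar with hh | hh
        · exact absurd (hg2 C hC.2 i hiC) (by omega)
        · exact hC.1 (g4 C hC.2 B₁ hB₁π i hiC hh)
      · rcases mem_insert.1 hstar with hh | hh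
        · exact absurd (hk2 C hC i hiC).2 (by omega)
        · have := hg2 B₁ hB₁π i hh
          have := hk2 C hC i hiC
          omega
    rcases mem_insert.1 hB with rfl | hB <;> rcases mem_insert.1 hB' with rfl | hB'
    · rfl
    · exact (key B' hB' i hiB' hiB).elim
    · exact (key B hB i hiB hiB').elim
    · rcases mem_union.1 hB with hB | hB <;> rcases mem_union.1 hB' with hB' | hB'
      · exact g4 B (mem_of_mem_erase hB) B' (mem_of_mem_erase hB') i hiB hiB'
      · have := hg2 B (mem_of_mem_erase hB) i hiB
        have := hk2 B' hB' i hiB'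
        omega
      · have := hg2 B' (mem_of_mem_erase hB') i hiB'
        have := hk2 B hB i hiB
        omega
      · exact k4 B hB B' hB' i hiB hiB'
  · rintro ⟨a, b, c, d, hab, hbc, hcd, B, hB, B', hB', hne, haB, hcB, hbB', hdB'⟩
    have cross1 : ∀ a' b' c' d' : ℕ, a' < b' → b' < c' → c' < d' →
        ∀ C ∈ π₁, ∀ C' ∈ π₁, C ≠ C' → a' ∈ C → c' ∈ C → b' ∈ C' → d' ∈ C' → False := by
      intro a' b' c' d' h1' h2' h3' C hC C' hC' hne' ha hc hb hd
      exact g5 ⟨a', b', c', d', h1', h2', h3', C, hC, C', hC', hne', ha, hc, hb, hd⟩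
    rcases mem_insert.1 hB with rfl | hB
    · -- B is the star block
      have hd : d ≤ N := by
        rcases mem_insert.1 hB' with rfl | hB'
        · rcases mem_insert.1 hdB' with hh | hh
          · omega
          · have := hg2 B₁ hB₁π d hh; omega
        · rcases mem_union.1 hB' with hB' | hB'
          · have := hg2 B' (mem_of_mem_erase hB') d hdB'; omega
          · have := (hk2 B' hB' d hdB').2; omega
      have haB₁ : a ∈ B₁ := by
        rcases mem_insert.1 haB with hh | hh
        · omega
        · exact hh
      have hcB₁ : c ∈ B₁ := by
        rcases mem_insert.1 hcB with hh | hh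
        · omega
        · exact hh
      rcases mem_insert.1 hB' with rfl | hB'
      · exact hne rfl
      rcases mem_union.1 hB' with hB' | hB'
      · rw [mem_erase] at hB'
        exact cross1 a b c d hab hbc hcd B₁ hB₁π B' hB'.2 (Ne.symm hB'.1) haB₁ hcB₁ hbB' hdB'
      · have := (hk2 B' hB' b hbB').1
        have := hg2 B₁ hB₁π c hcB₁
        omega
    · rcases mem_insert.1 hB' with rfl | hB'
      · -- B' is the star block
        rcases mem_insert.1 hdB' with hdN | hdB₁
        · -- d = N
          have hbB₁ : b ∈ B₁ := by
            rcases mem_insert.1 hbB' with hh | hh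
            · omega
            · exact hh
          rcases mem_union.1 hB with hB | hB
          · rw [mem_erase] at hB
            have hcj : c ≤ j := hg2 B hB.2 c hcB
            have hcnej : c ≠ j := fun hh =>
              hB.1 (g4 B hB.2 B₁ hB₁π c hcB (by rw [hh]; exact hjB₁))
            exact cross1 a b c j hab hbc (by omega) B hB.2 B₁ hB₁π hB.1 haB hcB hbB₁ hjB₁
          · have := (hk2 B hB a haB).1
            have := hg2 B₁ hB₁π b hbB₁
            omega
        · -- d ∈ B₁
          have hdj : d ≤ j := hg2 B₁ hB₁π d hdB₁
          have hbB₁ : b ∈ B₁ := by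
            rcases mem_insert.1 hbB' with hh | hh
            · omega
            · exact hh
          rcases mem_union.1 hB with hB | hB
          · rw [mem_erase] at hB
            exact cross1 a b c d hab hbc hcd B hB.2 B₁ hB₁π hB.1 haB hcB hbB₁ hdB₁
          · have := (hk2 B hB a haB).1
            omega
      · rcases mem_union.1 hB with hB | hB <;> rcases mem_union.1 hB' with hB' | hB'
        · rw [mem_erase] at hB hB'
          exact cross1 a b c d hab hbc hcd B hB.2 B' hB'.2 hne haB hcB hbB' hdB'
        · have := hg2 B (mem_of_mem_erase hB) c hcB
          have := (hk2 B' hB' b hbB').1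
          omega
        · have := hg2 B' (mem_of_mem_erase hB') b hbB'
          have := (hk2 B hB a haB).1
          omega
        · exact k5 ⟨a, b, c, d, hab, hbc, hcd, B, hB, B', hB', hne, haB, hcB, hbB', hdB'⟩

end glue

section glue2

variable {N j : ℕ} {π₁ π₂ : Finset (Finset ℕ)}

lemma glue_facts (hj : j < N) (h₁ : π₁ ∈ NCP (Finset.range (j + 1)))
    (h₂ : π₂ ∈ NCP (Finset.Ico (j + 1) N)) :
    ({N} : Finset ℕ) ∉ glueP N j π₁ π₂ ∧ jN N (glueP N j π₁ π₂) = j ∧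
      lowP N (glueP N j π₁ π₂) = π₁ ∧ midP N (glueP N j π₁ π₂) = π₂ := by
  obtain ⟨g1, g2, g3, g4, g5⟩ := mem_NCP.1 h₁
  obtain ⟨k1, k2, k3, k4, k5⟩ := mem_NCP.1 h₂
  obtain ⟨B₀, hB₀, hjB₀⟩ := g3 j (by simp)
  have hB₁ : blockOf π₁ j = B₀ := blockOf_eq g4 hB₀ hjB₀
  set B₁ := blockOf π₁ j with hB₁def
  have hB₁π : B₁ ∈ π₁ := hB₁ ▸ hB₀
  have hjB₁ : j ∈ B₁ := hB₁ ▸ hjB₀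
  have hg2 : ∀ B ∈ π₁, ∀ x ∈ B, x ≤ j := by
    intro B hB x hx
    have := g2 B hB hx
    rw [mem_range] at this
    omega
  have hNB₁ : N ∉ B₁ := fun h => by have := hg2 B₁ hB₁π N h; omega
  have hNπ₁ : ∀ B ∈ π₁, N ∉ B := fun B hB h => by have := hg2 B hB N h; omega
  have hGmem := glue_mem hj h₁ h₂
  obtain ⟨G1, G2, G3, G4, G5⟩ := mem_NCP.1 hGmem
  have hstarG : insert N B₁ ∈ glueP N j π₁ π₂ := mem_insert_self _ _
  have hblock : blockOf (glueP N j π₁ π₂) N = insert N B₁ :=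
    blockOf_eq G4 hstarG (mem_insert_self _ _)
  have hjeq : jN N (glueP N j π₁ π₂) = j := by
    rw [jN, hblock, Finset.erase_insert hNB₁]
    refine le_antisymm (Finset.sup_le fun x hx => hg2 B₁ hB₁π x hx) ?_
    exact Finset.le_sup (f := id) hjB₁
  have hsingle : ({N} : Finset ℕ) ∉ glueP N j π₁ π₂ := by
    intro h
    rcases mem_insert.1 h with hh | hh
    · have : j ∈ ({N} : Finset ℕ) := hh ▸ mem_insert_of_mem hjB₁
      rw [mem_singleton] at this
      omega
    · rcases mem_union.1 hh with hh | hh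
      · exact hNπ₁ _ (mem_of_mem_erase hh) (mem_singleton_self N)
      · have := k2 _ hh (mem_singleton_self N)
        rw [mem_Ico] at this
        omega
  have hfilter : (glueP N j π₁ π₂).filter (fun B => ¬ B ⊆ Finset.Ico (j + 1) N)
      = insert (insert N B₁) (π₁.erase B₁) := by
    ext B
    simp only [mem_filter, glueP, mem_insert, mem_union]
    constructor
    · rintro ⟨hB | hB, hni⟩
      · exact Or.inl hB
      · rcases hB with hB | hB
        · exact Or.inr hB
        · exact absurd (k2 B hB) hni
    · rintro (rfl | hB)
      · refine ⟨Or.inl rfl, fun h => ?_⟩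
        have := h (mem_insert_self N B₁)
        rw [mem_Ico] at this
        omega
      · refine ⟨Or.inr (Or.inl hB), fun h => ?_⟩
        have hBπ := mem_of_mem_erase hB
        obtain ⟨x, hx⟩ := g1 B hBπ
        have := h hx
        rw [mem_Ico] at this
        have := hg2 B hBπ x hx
        omega
  have hlow : lowP N (glueP N j π₁ π₂) = π₁ := by
    rw [lowP, hjeq, hfilter, Finset.image_insert, Finset.erase_insert hNB₁]
    have : (π₁.erase B₁).image (fun B => B.erase N) = π₁.erase B₁ := by
      apply Finset.image_congr (g := id) ?_ |>.trans image_id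
      intro B hB
      exact Finset.erase_eq_of_notMem (hNπ₁ B (mem_of_mem_erase hB))
    rw [this, Finset.insert_erase hB₁π]
  have hmid : midP N (glueP N j π₁ π₂) = π₂ := by
    rw [midP, hjeq]
    ext B
    simp only [mem_filter, glueP, mem_insert, mem_union]
    constructor
    · rintro ⟨rfl | hB | hB, hsub⟩
      · have := hsub (mem_insert_self N B₁)
        rw [mem_Ico] at this
        omega
      · have hBπ := mem_of_mem_erase hB
        obtain ⟨x, hx⟩ := g1 B hBπ
        have := hsub hx
        rw [mem_Ico] at this
        have := hg2 B hBπ x hx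
        omega
      · exact hB
    · intro hB
      exact ⟨Or.inr (Or.inr hB), k2 B hB⟩
  exact ⟨hsingle, hjeq, hlow, hmid⟩

lemma glue_recon {P : Finset (Finset ℕ)} (hP : P ∈ NCP (Finset.range (N + 1)))
    (hN : {N} ∉ P) : glueP N (jN N P) (lowP N P) (midP N P) = P := by
  obtain ⟨h1, h2, h3, h4, h5⟩ := mem_NCP.1 hP
  obtain ⟨hmemP, hNmem, hjB, hjlt, hjle, htri⟩ := struct hP hN
  set j := jN N P with hjdef
  set BN := blockOf P N with hBNdef
  have hBNni : ¬ BN ⊆ Finset.Ico (j + 1) N := by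
    intro h
    have := h hNmem
    rw [mem_Ico] at this
    omega
  have hBNlow : BN.erase N ∈ lowP N P :=
    mem_image_of_mem _ (mem_filter.2 ⟨hmemP, hBNni⟩)
  have hjlow : j ∈ BN.erase N := mem_erase.2 ⟨by omega, hjB⟩
  have h4low := (mem_NCP.1 (lowP_mem hP hN)).2.2.2.1
  have hblock : blockOf (lowP N P) j = BN.erase N := blockOf_eq h4low hBNlow hjlow
  have hstar : insert N (BN.erase N) = BN := Finset.insert_erase hNmem
  rw [glueP, hblock, hstar]
  ext B
  simp only [mem_insert, mem_union]
  constructor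
  · rintro (rfl | hB | hB)
    · exact hmemP
    · rw [mem_erase] at hB
      obtain ⟨C, hC, rfl⟩ := mem_image.1 hB.2
      rw [mem_filter] at hC
      have hNC : N ∉ C := by
        intro h
        exact hB.1 (by rw [h4 C hC.1 BN hmemP N h hNmem])
      rw [Finset.erase_eq_of_notMem hNC]
      exact hC.1
    · rw [midP, mem_filter] at hB
      exact hB.1
  · intro hB
    by_cases hBN' : B = BN
    · exact Or.inl hBN'
    · rcases htri B hB hBN' with hlowc | hmidc
      · refine Or.inr (Or.inl (mem_erase.2 ⟨?_, ?_⟩))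
        · intro h
          have : j ∈ B := by
            have h' := hjlow
            rw [← h] at h'
            exact h'
          exact hBN' (h4 B hB BN hmemP j this hjB)
        · have hNB : N ∉ B := fun h => absurd (hlowc N h) (by omega)
          have hni : ¬ B ⊆ Finset.Ico (j + 1) N := by
            intro h
            obtain ⟨x, hx⟩ := h1 B hB
            have := h hx
            rw [mem_Ico] at this
            have := hlowc x hx
            omega
          have : B.erase N = B := Finset.erase_eq_of_notMem hNB
          rw [← this]
          exact mem_image_of_mem _ (mem_filter.2 ⟨hB, hni⟩)
      · exact Or.inr (Or.inr (mem_filter.2 ⟨hB, hmidc⟩))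

end glue2

lemma sum_partC {N : ℕ} {δ : ℝ} :
    ∑ P ∈ (NCP (Finset.range (N + 1))).filter (fun P => {N} ∉ P), δ ^ P.card
      = ∑ j ∈ Finset.range N, G δ (Finset.range (j + 1)) * G δ (Finset.Ico (j + 1) N) := by
  have hrhs : ∀ j : ℕ, G δ (Finset.range (j + 1)) * G δ (Finset.Ico (j + 1) N)
      = ∑ p ∈ NCP (Finset.range (j + 1)) ×ˢ NCP (Finset.Ico (j + 1) N),
          δ ^ (p.1.card + p.2.card) := by
    intro j
    rw [G, G, Finset.sum_mul_sum, Finset.sum_product]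
    simp_rw [pow_add]
  simp_rw [hrhs]
  rw [← Finset.sum_sigma (Finset.range N)
    (fun j => NCP (Finset.range (j + 1)) ×ˢ NCP (Finset.Ico (j + 1) N))
    (fun x => δ ^ (x.2.1.card + x.2.2.card))]
  refine Finset.sum_bij (fun P _ => ⟨jN N P, (lowP N P, midP N P)⟩) ?_ ?_ ?_ ?_
  · intro P hP
    rw [mem_filter] at hP
    obtain ⟨hmemP, hNmem, hjB, hjlt, hjle, htri⟩ := struct hP.1 hP.2
    rw [Finset.mem_sigma, Finset.mem_product]
    exact ⟨mem_range.2 hjlt, lowP_mem hP.1 hP.2, midP_mem hP.1 hP.2⟩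
  · intro P hP Q hQ h
    rw [mem_filter] at hP hQ
    replace h : (⟨jN N P, (lowP N P, midP N P)⟩ :
        Σ _ : ℕ, Finset (Finset ℕ) × Finset (Finset ℕ)) = ⟨jN N Q, (lowP N Q, midP N Q)⟩ := h
    obtain ⟨h1, h2⟩ := Sigma.mk.inj_iff.1 h
    have h2' := eq_of_heq h2
    rw [← glue_recon hP.1 hP.2, ← glue_recon hQ.1 hQ.2, h1,
      (Prod.mk.inj h2').1, (Prod.mk.inj h2').2]
  · rintro ⟨j, π₁, π₂⟩ hx
    rw [Finset.mem_sigma, Finset.mem_product] at hx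
    obtain ⟨hj, h₁, h₂⟩ := hx
    rw [mem_range] at hj
    obtain ⟨hs, hje, hl, hm⟩ := glue_facts hj h₁ h₂
    refine ⟨glueP N j π₁ π₂, mem_filter.2 ⟨glue_mem hj h₁ h₂, hs⟩, ?_⟩
    simp only [hje, hl, hm]
  · intro P hP
    rw [mem_filter] at hP
    rw [card_eq_low_add_mid hP.1 hP.2]

lemma G_rec (N : ℕ) (δ : ℝ) :
    G δ (Finset.range (N + 1)) = δ * G δ (Finset.range N) +
      ∑ j ∈ Finset.range N, G δ (Finset.range (j + 1)) * G δ (Finset.Ico (j + 1) N) := by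
  rw [G, ← Finset.sum_filter_add_sum_filter_not (NCP (Finset.range (N + 1)))
    (fun P => {N} ∈ P), sum_partA, sum_partC]

/-- The moments `Σ_{π ∈ NC(n)} δ^{|π|}` of the free Poisson law of rate `δ`
satisfy the paper's recursion for `Tr₀(∪ⁿ)`. -/
theorem ncMoment_recursion (δ : ℝ) :
    ∀ n : ℕ, 1 ≤ n →
      ncMoment δ n = (δ - 1) * ncMoment δ (n - 1) +
        ∑ k ∈ Finset.range n, ncMoment δ k * ncMoment δ (n - 1 - k) := by
  intro n hn
  obtain ⟨N, rfl⟩ : ∃ N, n = N + 1 := ⟨n - 1, by omega⟩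
  have hm : ∀ k, ncMoment δ k = G δ (Finset.range k) := ncMoment_eq_G δ
  have hsum : ∑ k ∈ Finset.range (N + 1), ncMoment δ k * ncMoment δ (N + 1 - 1 - k)
      = (∑ j ∈ Finset.range N, ncMoment δ (j + 1) * ncMoment δ (N - (j + 1)))
        + ncMoment δ 0 * ncMoment δ N := by
    rw [Finset.sum_range_succ']
    congr 1
  rw [hsum, ncMoment_zero, one_mul]
  have hIco : ∀ j, G δ (Finset.Ico (j + 1) N) = ncMoment δ (N - (j + 1)) := by
    intro j
    rw [G_Ico, hm]
  have : ncMoment δ (N + 1) = δ * ncMoment δ N +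
      ∑ j ∈ Finset.range N, ncMoment δ (j + 1) * ncMoment δ (N - (j + 1)) := by
    rw [hm, G_rec]
    congr 1
    · rw [hm]
    · refine Finset.sum_congr rfl fun j hj => ?_
      rw [hm, hIco]
  rw [show N + 1 - 1 = N from rfl, this]
  ring
end

section
/- Let δ ≥ 1 be a real number, set λ₋ = (1−Real.sqrt δ)^2 and λ₊ = (1+Real.sqrt δ)^2, and let a : ℕ → ℝ be the recursion sequence for δ. Then for every n : ℕ, ∫ x in Set.Ioc λ₋ λ₊, x^n · Real.sqrt((λ₊−x)·(x−λ₋)) / (2·π·x) dx = a(n). In particular (n = 0) the density x ↦ Real.sqrt((λ₊−x)(x−λ₋))/(2πx) on (λ₋, λ₊] defines a probability measure (the Marchenko–Pastur / free Poisson law of rate δ), which is absolutely continuous and hence has no atoms. (This is the paper's identification of the law of the cup element ∪ as the atomless free Poisson distribution with R-transform δ(1−z)^{-1}.) -/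
open MeasureTheory

namespace FreePoissonAux
open Finset Real intervalIntegral Set MeasureTheory





lemma hockey (r n : ℕ) : ∑ i ∈ range (n+1), i.choose r = (n+1).choose (r+1) := by
  induction n with
  | zero =>
    cases r with
    | zero => simp
    | succ r => simp [Nat.choose_eq_zero_of_lt]
  | succ n ih =>
    rw [Finset.sum_range_succ, ih, Nat.choose_succ_succ (n+1) r, Nat.add_comm]

lemma dualVandermonde (r : ℕ) : ∀ n p : ℕ,
    ∑ j ∈ range (n+1), (j.choose p) * ((n-j).choose r) = (n+1).choose (p+r+1) := by
  intro n
  induction n with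
  | zero =>
    intro p
    simp only [Finset.sum_range_one, Nat.zero_sub, Nat.choose_zero_right]
    cases p with
    | zero =>
      cases r with
      | zero => simp
      | succ r => simp [Nat.choose_eq_zero_of_lt]
    | succ p =>
      have : Nat.choose 1 (p+1+r+1) = 0 := by
        apply Nat.choose_eq_zero_of_lt; omega
      simp [Nat.choose_eq_zero_of_lt, this]
  | succ n ih =>
    intro p
    cases p with
    | zero =>
      simp only [Nat.choose_zero_right, one_mul, Nat.zero_add]
      have hr : ∑ j ∈ range (n+2), ((n+1-j).choose r)
          = ∑ j ∈ range (n+2), ((j).choose r) := by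
        rw [← Finset.sum_range_reflect (fun j => (j.choose r)) (n+2)]
        apply Finset.sum_congr rfl
        intro j hj
        simp only [Finset.mem_range] at hj
        have : n + 2 - 1 - j = n + 1 - j := by omega
        rw [this]
      calc ∑ j ∈ range (n+1+1), ((n+1-j).choose r)
          = ∑ j ∈ range (n+2), ((j).choose r) := hr
        _ = (n+2).choose (r+1) := hockey r (n+1)
    | succ p =>
      rw [Finset.sum_range_succ' (fun j => (j.choose (p+1)) * ((n+1-j).choose r)) (n+1)]
      have hstep : ∀ i ∈ range (n+1),
          ((i+1).choose (p+1)) * ((n+1-(i+1)).choose r)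
            = (i.choose p) * ((n-i).choose r) + (i.choose (p+1)) * ((n-i).choose r) := by
        intro i _
        have h1 : n+1-(i+1) = n-i := by omega
        rw [Nat.choose_succ_succ, h1, add_mul]
      rw [Finset.sum_congr rfl hstep, Finset.sum_add_distrib, ih p, ih (p+1)]
      have h0 : Nat.choose 0 (p+1) = 0 := by simp
      rw [h0, zero_mul, add_zero]
      have e : p+1+r+1 = (p+r+1)+1 := by ring
      rw [e, Nat.choose_succ_succ (n+1) (p+r+1)]





noncomputable def e (δ : ℝ) (k : ℕ) : ℝ :=
  if k % 2 = 0 then ((catalan (k/2) : ℝ) * δ ^ (k/2)) else 0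

lemma e_even (δ : ℝ) (i : ℕ) : e δ (2*i) = (catalan i : ℝ) * δ ^ i := by
  simp [e, Nat.mul_div_cancel_left, Nat.mul_mod_right]

lemma e_odd (δ : ℝ) {k : ℕ} (hk : k % 2 = 1) : e δ k = 0 := by
  simp [e, hk]

lemma e_zero (δ : ℝ) : e δ 0 = 1 := by simp [e]

lemma e_one (δ : ℝ) : e δ 1 = 0 := by simp [e]

lemma e_step (δ : ℝ) (L : ℕ) :
    e δ (L+2) = δ * ∑ p ∈ range (L+1), e δ p * e δ (L-p) := by
  rcases Nat.even_or_odd L with ⟨j, hj⟩ | ⟨j, hj⟩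
  · -- L = 2*j
    subst hj
    have hL : j + j = 2*j := by ring
    rw [hL]
    have himg : (range (j+1)).image (fun i => 2*i) ⊆ range (2*j+1) := by
      intro x hx
      simp only [Finset.mem_image, Finset.mem_range] at hx ⊢
      obtain ⟨i, hi, rfl⟩ := hx
      omega
    have hv : ∀ p ∈ range (2*j+1), p ∉ (range (j+1)).image (fun i => 2*i) →
        e δ p * e δ (2*j-p) = 0 := by
      intro p hp hpn
      rcases Nat.even_or_odd p with ⟨i, hi⟩ | ⟨i, hi⟩
      · exfalso
        apply hpn
        simp only [Finset.mem_image, Finset.mem_range]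
        simp only [Finset.mem_range] at hp
        exact ⟨i, by omega, by omega⟩
      · rw [e_odd δ (by omega), zero_mul]
    rw [← Finset.sum_subset himg hv,
      Finset.sum_image (by intro a _ b _ h; simp only at h; omega)]
    have hterm : ∀ i ∈ range (j+1),
        e δ (2*i) * e δ (2*j - 2*i) = ((catalan i : ℝ) * (catalan (j-i) : ℝ)) * δ ^ j := by
      intro i hi
      simp only [Finset.mem_range] at hi
      have h1 : 2*j - 2*i = 2*(j-i) := by omega
      rw [h1, e_even, e_even]
      have h2 : δ ^ i * δ ^ (j-i) = δ ^ j := by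
        rw [← pow_add]; congr 1; omega
      rw [← h2]
      ring
    rw [Finset.sum_congr rfl hterm, ← Finset.sum_mul]
    have hc : ∑ i ∈ range (j+1), ((catalan i : ℝ) * (catalan (j-i) : ℝ))
        = (catalan (j+1) : ℝ) := by
      rw [catalan_succ]
      push_cast
      rw [← Finset.sum_range fun i => ((catalan i : ℝ) * (catalan (j-i) : ℝ))]
    rw [hc]
    have h3 : 2*j+2 = 2*(j+1) := by ring
    rw [h3, e_even]
    ring
  · -- L = 2*j+1, both sides vanish
    subst hj
    have h1 : e δ (2*j+1+2) = 0 := e_odd δ (by omega)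
    rw [h1]
    have h2 : ∀ p ∈ range (2*j+1+1), e δ p * e δ (2*j+1-p) = 0 := by
      intro p hp
      simp only [Finset.mem_range] at hp
      rcases Nat.even_or_odd p with ⟨i, hi⟩ | ⟨i, hi⟩
      · rw [e_odd δ (show (2*j+1-p) % 2 = 1 by omega), mul_zero]
      · rw [e_odd δ (show p % 2 = 1 by omega), zero_mul]
    rw [Finset.sum_congr rfl h2]
    simp






noncomputable def mseq (δ : ℝ) (n : ℕ) : ℝ :=
  ∑ k ∈ range (n+1), (n.choose k : ℝ) * e δ k * (1+δ)^(n-k)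

lemma mseq_extend (δ : ℝ) {n N : ℕ} (h : n + 1 ≤ N) :
    mseq δ n = ∑ k ∈ range N, (n.choose k : ℝ) * e δ k * (1+δ)^(n-k) := by
  unfold mseq
  apply Finset.sum_subset
  · intro x hx; simp only [Finset.mem_range] at *; omega
  · intro x hx hxn
    simp only [Finset.mem_range] at hx hxn
    rw [Nat.choose_eq_zero_of_lt (by omega)]
    simp

lemma triangle (n : ℕ) (g : ℕ → ℕ → ℝ) (hg : ∀ p r, n < p + r → g p r = 0) :
    ∑ L ∈ range (n+1), ∑ p ∈ range (L+1), g p (L-p)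
      = ∑ p ∈ range (n+1), ∑ r ∈ range (n+1), g p r := by
  have step1 : ∀ p, p ∈ range (n+1) →
      ∑ r ∈ range (n+1), g p r = ∑ L ∈ range (n+1), if p ≤ L then g p (L-p) else 0 := by
    intro p hp
    simp only [Finset.mem_range] at hp
    rw [← Finset.sum_filter]
    have hset : (range (n+1)).filter (fun L => p ≤ L) = Finset.Ico p (n+1) := by
      ext x; simp [Finset.mem_filter, Finset.mem_range, Finset.mem_Ico]; omega
    rw [hset, Finset.sum_Ico_eq_sum_range]
    have : ∀ i ∈ range (n+1-p), g p (p+i-p) = g p i := by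
      intro i _; congr 1; omega
    rw [Finset.sum_congr rfl this]
    symm
    apply Finset.sum_subset
    · intro x hx; simp only [Finset.mem_range] at *; omega
    · intro x hx hxn
      simp only [Finset.mem_range] at hx hxn
      exact hg p x (by omega)
  rw [Finset.sum_congr rfl step1, Finset.sum_comm]
  apply Finset.sum_congr rfl
  intro L hL
  simp only [Finset.mem_range] at hL
  rw [← Finset.sum_filter]
  have hset : (range (n+1)).filter (fun p => p ≤ L) = range (L+1) := by
    ext x; simp [Finset.mem_filter, Finset.mem_range]; omega
  rw [hset]




lemma m_quad (δ : ℝ) (n : ℕ) :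
    mseq δ (n+2) = (1+δ) * mseq δ (n+1)
      + δ * ∑ j ∈ range (n+1), mseq δ j * mseq δ (n-j) := by
  set c : ℝ := 1 + δ with hc
  -- step 1 : expand m (n+2)
  have h2 : mseq δ (n+2)
      = ((∑ K ∈ range (n+2), ((n+1).choose K : ℝ) * e δ (K+1) * c^(n+1-K))
        + (∑ K ∈ range (n+2), ((n+1).choose (K+1) : ℝ) * e δ (K+1) * c^(n+1-K)))
        + c^(n+2) := by
    unfold mseq
    rw [Finset.sum_range_succ' (fun k => ((n+2).choose k : ℝ) * e δ k * c^(n+2-k)) (n+2)]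
    congr 1
    · rw [← Finset.sum_add_distrib]
      apply Finset.sum_congr rfl
      intro K hK
      have hch : ((n+2).choose (K+1) : ℝ) = ((n+1).choose K : ℝ) + ((n+1).choose (K+1) : ℝ) := by
        rw [← Nat.cast_add, Nat.choose_succ_succ (n+1) K]
      have hexp : n+2-(K+1) = n+1-K := by omega
      rw [hexp, hch]
      ring
    · rw [e_zero]
      norm_num
  -- step 2 : expand c * m (n+1)
  have h3 : c * mseq δ (n+1)
      = (∑ K ∈ range (n+2), ((n+1).choose (K+1) : ℝ) * e δ (K+1) * c^(n+1-K))
        + c^(n+2) := by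
    have hdrop : ∑ K ∈ range (n+2), ((n+1).choose (K+1) : ℝ) * e δ (K+1) * c^(n+1-K)
        = ∑ K ∈ range (n+1), ((n+1).choose (K+1) : ℝ) * e δ (K+1) * c^(n+1-K) := by
      symm
      apply Finset.sum_subset (Finset.range_subset_range.2 (by omega : n+1 ≤ n+2))
      intro x hx hxn
      simp only [Finset.mem_range] at hx hxn
      have : x = n+1 := by omega
      subst this
      rw [Nat.choose_eq_zero_of_lt (by omega)]
      simp
    rw [hdrop]
    unfold mseq
    rw [Finset.sum_range_succ' (fun k => ((n+1).choose k : ℝ) * e δ k * c^(n+1-k)) (n+1)]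
    rw [mul_add, Finset.mul_sum]
    congr 1
    · apply Finset.sum_congr rfl
      intro K hK
      simp only [Finset.mem_range] at hK
      have hexp : c * c^(n+1-(K+1)) = c^(n+1-K) := by
        rw [← pow_succ']
        congr 1
        omega
      rw [← mul_assoc, mul_comm c, mul_assoc, mul_assoc, mul_comm (e δ (K+1)), ← mul_assoc, hexp]
      ring
    · rw [e_zero, Nat.choose_zero_right]
      push_cast
      ring
  -- step 3 : the difference sum equals the square sum
  set g : ℕ → ℕ → ℝ := fun p r => ((n+1).choose (p+r+1) : ℝ) * e δ p * e δ r * c^(n-(p+r))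
    with hg
  have hgv : ∀ p r, n < p + r → g p r = 0 := by
    intro p r hpr
    rw [hg]
    simp only
    rw [Nat.choose_eq_zero_of_lt (by omega)]
    simp
  have h4 : ∑ K ∈ range (n+2), ((n+1).choose K : ℝ) * e δ (K+1) * c^(n+1-K)
      = δ * ∑ p ∈ range (n+1), ∑ r ∈ range (n+1), g p r := by
    rw [Finset.sum_range_succ' (fun K => ((n+1).choose K : ℝ) * e δ (K+1) * c^(n+1-K)) (n+1)]
    rw [e_one]
    have hterm : ∀ L ∈ range (n+1),
        ((n+1).choose (L+1) : ℝ) * e δ (L+1+1) * c^(n+1-(L+1))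
          = δ * ∑ p ∈ range (L+1), g p (L-p) := by
      intro L hL
      simp only [Finset.mem_range] at hL
      have hLL : L+1+1 = L+2 := rfl
      have h6 : n+1-(L+1) = n-L := by omega
      rw [hLL, e_step δ L, h6]
      have hms : ∑ p ∈ range (L+1), ((n+1).choose (L+1) : ℝ) * (e δ p * e δ (L-p)) * c^(n-L)
          = (∑ p ∈ range (L+1), e δ p * e δ (L-p)) * (((n+1).choose (L+1) : ℝ) * c^(n-L)) := by
        rw [Finset.sum_mul]
        apply Finset.sum_congr rfl
        intro p _
        ring
      have hlhs : ((n+1).choose (L+1) : ℝ) * (δ * ∑ p ∈ range (L+1), e δ p * e δ (L-p)) * c^(n-L)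
          = δ * ∑ p ∈ range (L+1), ((n+1).choose (L+1) : ℝ) * (e δ p * e δ (L-p)) * c^(n-L) := by
        rw [hms]
        ring
      rw [hlhs]
      congr 1
      apply Finset.sum_congr rfl
      intro p hp
      simp only [Finset.mem_range] at hp
      rw [hg]
      simp only
      have h5 : p + (L - p) = L := by omega
      rw [h5]
      ring
    rw [Finset.sum_congr rfl hterm, ← Finset.mul_sum,
      triangle n g hgv]
    simp
  -- step 4 : expand the RHS convolution
  have h7 : ∑ j ∈ range (n+1), mseq δ j * mseq δ (n-j)
      = ∑ p ∈ range (n+1), ∑ r ∈ range (n+1), g p r := by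
    have hj : ∀ j ∈ range (n+1), mseq δ j * mseq δ (n-j)
        = ∑ p ∈ range (n+1), ∑ r ∈ range (n+1),
            (((j.choose p) * ((n-j).choose r) : ℕ) : ℝ) * e δ p * e δ r * c^(n-(p+r)) := by
      intro j hjm
      simp only [Finset.mem_range] at hjm
      rw [mseq_extend δ (show j+1 ≤ n+1 by omega),
        mseq_extend δ (show (n-j)+1 ≤ n+1 by omega),
        Finset.sum_mul_sum]
      apply Finset.sum_congr rfl
      intro p hp
      apply Finset.sum_congr rfl
      intro r hr
      push_cast
      rcases le_or_gt p j with hpj | hpj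
      · rcases le_or_gt r (n-j) with hrj | hrj
        · have hexp : c^(j-p) * c^(n-j-r) = c^(n-(p+r)) := by
            rw [← pow_add]
            congr 1
            omega
          rw [← hexp]
          ring
        · rw [Nat.choose_eq_zero_of_lt hrj]
          push_cast
          ring
      · rw [Nat.choose_eq_zero_of_lt hpj]
        push_cast
        ring
    rw [Finset.sum_congr rfl hj]
    rw [Finset.sum_comm]
    apply Finset.sum_congr rfl
    intro p hp
    rw [Finset.sum_comm]
    apply Finset.sum_congr rfl
    intro r hr
    have : ∑ j ∈ range (n+1), (((j.choose p) * ((n-j).choose r) : ℕ) : ℝ) * e δ p * e δ r * c^(n-(p+r))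
        = (∑ j ∈ range (n+1), (((j.choose p) * ((n-j).choose r) : ℕ) : ℝ)) * (e δ p * e δ r * c^(n-(p+r))) := by
      rw [Finset.sum_mul]
      apply Finset.sum_congr rfl
      intro j _
      ring
    rw [this, ← Nat.cast_sum, dualVandermonde r n p, hg]
    push_cast
    ring
  rw [h7]
  linarith [h2, h3, h4]





noncomputable def P (k : ℕ) : ℝ := ∫ t in (-1:ℝ)..1, t ^ k * Real.sqrt (1 - t ^ 2)

lemma P_cont (k : ℕ) : Continuous fun t : ℝ => t ^ k * Real.sqrt (1 - t ^ 2) := by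
  fun_prop

lemma P_zero : P 0 = π / 2 := by
  unfold P
  simp only [pow_zero, one_mul]
  exact integral_sqrt_one_sub_sq

lemma P_odd (j : ℕ) : P (2*j+1) = 0 := by
  unfold P
  have h := intervalIntegral.integral_comp_neg (a := (-1:ℝ)) (b := 1)
    (fun t => t ^ (2*j+1) * Real.sqrt (1 - t ^ 2))
  simp only [neg_neg] at h
  have h2 : ∀ x : ℝ, (-x) ^ (2*j+1) * Real.sqrt (1 - (-x) ^ 2)
      = -(x ^ (2*j+1) * Real.sqrt (1 - x ^ 2)) := by
    intro x
    rw [Odd.neg_pow ⟨j, by ring⟩, neg_pow, pow_two, neg_mul_neg, ← pow_two]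
    ring_nf
  simp only [h2] at h
  rw [intervalIntegral.integral_neg] at h
  linarith





lemma P_rec (k : ℕ) : ((k:ℝ)+1) * P k = ((k:ℝ)+4) * P (k+2) := by
  set E : ℝ → ℝ := fun x => (((k:ℝ)+1) * x^k - ((k:ℝ)+4) * x^(k+2)) * Real.sqrt (1-x^2)
    with hE
  set G : ℝ → ℝ := fun t => t^(k+1) * ((1 - t^2) * Real.sqrt (1 - t^2)) with hG
  have hcont : ContinuousOn G (Set.Icc (-1:ℝ) 1) := by fun_prop
  have hderiv : ∀ x ∈ Set.Ioo (-1:ℝ) 1, HasDerivWithinAt G (E x) (Set.Ioi x) x := by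
    intro x hx
    apply HasDerivAt.hasDerivWithinAt
    have hpos : 0 < 1 - x^2 := by
      simp only [Set.mem_Ioo] at hx
      nlinarith [hx.1, hx.2]
    have hne : Real.sqrt (1-x^2) ≠ 0 := ne_of_gt (Real.sqrt_pos.2 hpos)
    have hs : Real.sqrt (1-x^2) ^ 2 = 1 - x^2 := Real.sq_sqrt (le_of_lt hpos)
    have hpoly : HasDerivAt (fun t : ℝ => 1 - t^2) (-(2*x)) x := by
      simpa using ((hasDerivAt_pow 2 x).const_sub 1)
    have hsqrt : HasDerivAt (fun t : ℝ => Real.sqrt (1 - t^2))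
        (1 / (2 * Real.sqrt (1-x^2)) * (-(2*x))) x :=
      (Real.hasDerivAt_sqrt (ne_of_gt hpos)).comp x hpoly
    have hg : HasDerivAt (fun t : ℝ => (1 - t^2) * Real.sqrt (1 - t^2))
        (-(3*x) * Real.sqrt (1-x^2)) x := by
      have := hpoly.mul hsqrt
      refine this.congr_deriv (Eq.symm ?_)
      field_simp
      linear_combination (-x) * hs
    have := (hasDerivAt_pow (k+1) x).mul hg
    refine this.congr_deriv (Eq.symm ?_)
    simp only [hE]
    push_cast
    ring
  have hle : (-1:ℝ) ≤ 1 := by norm_num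
  have hint : IntervalIntegrable E volume (-1) 1 := by
    apply Continuous.intervalIntegrable
    fun_prop
  have hftc := intervalIntegral.integral_eq_sub_of_hasDeriv_right_of_le hle hcont hderiv hint
  have hG1 : G 1 = 0 := by simp [hG]
  have hGm1 : G (-1) = 0 := by simp [hG]
  rw [hG1, hGm1, sub_zero] at hftc
  have hsplit : ∫ x in (-1:ℝ)..1, E x
      = ((k:ℝ)+1) * P k - ((k:ℝ)+4) * P (k+2) := by
    unfold P
    rw [← intervalIntegral.integral_const_mul, ← intervalIntegral.integral_const_mul,
      ← intervalIntegral.integral_sub]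
    · apply intervalIntegral.integral_congr
      intro x _
      simp only [hE]
      ring
    · apply Continuous.intervalIntegrable; fun_prop
    · apply Continuous.intervalIntegrable; fun_prop
  rw [hsplit] at hftc
  linarith

lemma catalan_ratio (j : ℕ) : (j+2) * catalan (j+1) = 2*(2*j+1) * catalan j := by
  have h1 := succ_mul_catalan_eq_centralBinom (j+1)
  have h2 := Nat.succ_mul_centralBinom_succ j
  have h3 := succ_mul_catalan_eq_centralBinom j
  have key : (j+1) * ((j+2) * catalan (j+1)) = (j+1) * (2*(2*j+1) * catalan j) := by
    calc (j+1) * ((j+2) * catalan (j+1)) = (j+1) * ((j+1+1) * catalan (j+1)) := by ring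
      _ = (j+1) * Nat.centralBinom (j+1) := by rw [h1]
      _ = 2*(2*j+1) * Nat.centralBinom j := h2
      _ = 2*(2*j+1) * ((j+1) * catalan j) := by rw [h3]
      _ = (j+1) * (2*(2*j+1) * catalan j) := by ring
  exact Nat.eq_of_mul_eq_mul_left (by omega) key

lemma P_even (j : ℕ) : P (2*j) = π * (catalan j : ℝ) / 2^(2*j+1) := by
  induction j with
  | zero => simp [P_zero]
  | succ j ih =>
    have hrec := P_rec (2*j)
    rw [ih] at hrec
    have hc : ((j:ℝ)+2) * (catalan (j+1) : ℝ) = 2*(2*(j:ℝ)+1) * (catalan j : ℝ) := by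
      exact_mod_cast catalan_ratio j
    have he : 2*(j+1) = 2*j+2 := by ring
    rw [he]
    have hp2 : (2:ℝ)^(2*j+2+1) = 2^(2*j+1) * 4 := by
      rw [show 2*j+2+1 = (2*j+1)+2 by ring, pow_add]
      norm_num
    rw [hp2]
    push_cast at hrec ⊢
    have h24 : (2*(j:ℝ)+4) ≠ 0 := by positivity
    have hpow : (2:ℝ)^(2*j+1) ≠ 0 := by positivity
    field_simp at hrec ⊢
    nlinarith [hrec, hc, Real.pi_pos, pow_pos (show (0:ℝ) < 2 by norm_num) (2*j+1)]




lemma e_P (δ : ℝ) (hδ : 1 ≤ δ) (k : ℕ) :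
    (2*Real.sqrt δ)^k * P k = (π/2) * e δ k := by
  have hs2 : Real.sqrt δ ^ 2 = δ := Real.sq_sqrt (by linarith)
  rcases Nat.even_or_odd k with ⟨j, hj⟩ | ⟨j, hj⟩
  · have h1 : k = 2*j := by omega
    subst h1
    rw [P_even, e_even]
    have h2 : (2*Real.sqrt δ)^(2*j) = 4^j * δ^j := by
      rw [pow_mul, show (2*Real.sqrt δ)^2 = 4*δ by rw [mul_pow, hs2]; norm_num, mul_pow]
    have h3 : (2:ℝ)^(2*j+1) = 2 * 4^j := by
      rw [pow_succ, pow_mul]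
      norm_num
      ring
    rw [h2, h3]
    have h4 : (4:ℝ)^j ≠ 0 := by positivity
    field_simp
  · have h1 : k = 2*j+1 := by omega
    subst h1
    rw [P_odd, e_odd δ (by omega)]
    ring

lemma keyInt (δ : ℝ) (hδ : 1 ≤ δ) (n : ℕ) :
    ∫ x in ((1+δ) - 2*Real.sqrt δ)..((1+δ) + 2*Real.sqrt δ),
      x^n * Real.sqrt (((((1+δ) + 2*Real.sqrt δ)) - x) * (x - ((1+δ) - 2*Real.sqrt δ)))
      = 2*π*δ * mseq δ n := by
  set s := Real.sqrt δ with hsdef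
  have hs0 : 0 < s := Real.sqrt_pos.2 (by linarith)
  have hs2 : s^2 = δ := Real.sq_sqrt (by linarith)
  set c : ℝ := 1 + δ with hcdef
  have hcv := intervalIntegral.integral_comp_mul_add
    (a := (-1:ℝ)) (b := 1)
    (f := fun x => x^n * Real.sqrt (((c + 2*s) - x) * (x - (c - 2*s))))
    (c := 2*s) (by positivity) c
  have hends1 : 2*s*(-1) + c = c - 2*s := by ring
  have hends2 : 2*s*1 + c = c + 2*s := by ring
  rw [hends1, hends2] at hcv
  have hsmul : ∀ r : ℝ, (2*s)⁻¹ • r = r / (2*s) := by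
    intro r; rw [smul_eq_mul]; ring
  rw [hsmul] at hcv
  have hint : ∫ x in (c - 2*s)..(c + 2*s),
      x^n * Real.sqrt (((c + 2*s) - x) * (x - (c - 2*s)))
      = (2*s) * ∫ t in (-1:ℝ)..1,
          (2*s*t + c)^n * Real.sqrt (((c + 2*s) - (2*s*t + c)) * ((2*s*t + c) - (c - 2*s))) := by
    rw [hcv]
    field_simp
  rw [hint]
  -- simplify the inner integrand
  have hinner : ∀ t : ℝ,
      (2*s*t + c)^n * Real.sqrt (((c + 2*s) - (2*s*t + c)) * ((2*s*t + c) - (c - 2*s)))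
      = ∑ k ∈ range (n+1), ((n.choose k : ℝ) * c^(n-k) * (2*s)^k * (2*s))
          * (t^k * Real.sqrt (1 - t^2)) := by
    intro t
    have h1 : ((c + 2*s) - (2*s*t + c)) * ((2*s*t + c) - (c - 2*s))
        = (2*s)^2 * (1 - t^2) := by ring
    rw [h1, Real.sqrt_mul (by positivity), Real.sqrt_sq (by positivity)]
    rw [add_pow]
    rw [Finset.sum_mul]
    apply Finset.sum_congr rfl
    intro k hk
    rw [mul_pow]
    ring
  rw [intervalIntegral.integral_congr (g := fun t => ∑ k ∈ range (n+1),
      ((n.choose k : ℝ) * c^(n-k) * (2*s)^k * (2*s)) * (t^k * Real.sqrt (1 - t^2)))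
      (fun t _ => hinner t)]
  rw [intervalIntegral.integral_finset_sum (fun k _ => by
    apply Continuous.intervalIntegrable; fun_prop)]
  have hterm : ∀ k ∈ range (n+1),
      ∫ t in (-1:ℝ)..1, ((n.choose k : ℝ) * c^(n-k) * (2*s)^k * (2*s))
          * (t^k * Real.sqrt (1 - t^2))
      = ((n.choose k : ℝ) * c^(n-k) * (2*s)^k * (2*s)) * P k := by
    intro k _
    rw [intervalIntegral.integral_const_mul]
    rfl
  rw [Finset.sum_congr rfl hterm]
  unfold mseq
  rw [Finset.mul_sum, Finset.mul_sum]
  apply Finset.sum_congr rfl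
  intro k hk
  have := e_P δ hδ k
  calc 2*s * ((n.choose k : ℝ) * c^(n-k) * (2*s)^k * (2*s) * P k)
      = ((n.choose k : ℝ) * c^(n-k)) * ((2*s)^k * P k) * (4 * s^2) := by ring
    _ = ((n.choose k : ℝ) * c^(n-k)) * ((π/2) * e δ k) * (4 * δ) := by rw [this, hs2]
    _ = 2*π*δ * ((n.choose k : ℝ) * e δ k * c^(n-k)) := by ring





lemma massInt (δ s c q : ℝ) (hδ : 1 ≤ δ) (hs : s = Real.sqrt δ)
    (hc : c = 1 + δ) (hq : q = (δ-1)^2) :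
    ∫ x in (c-2*s)..(c+2*s),
      Real.sqrt (((c+2*s) - x) * (x - (c-2*s))) / x = 2 * π := by
  have hδ0 : (0:ℝ) ≤ δ := by linarith
  have hs1 : 1 ≤ s := by rw [hs]; exact Real.one_le_sqrt.2 hδ
  have hs0 : 0 < s := by linarith
  have hs2 : s^2 = δ := by rw [hs]; exact Real.sq_sqrt hδ0
  have hq4 : c^2 - q = 4*s^2 := by rw [hc, hq, hs2]; ring
  have hlm0 : 0 ≤ c - 2*s := by nlinarith [sq_nonneg (1-s)]
  have hle : c - 2*s ≤ c + 2*s := by linarith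
  have hlp0 : 0 < c + 2*s := by nlinarith
  set u : ℝ → ℝ := fun y => Real.sqrt ((c+2*s - y)*(y - (c-2*s))) with hu
  set F : ℝ → ℝ := fun y => u y + c * Real.arcsin ((y - c)/(2*s))
      - (δ-1) * Real.arcsin ((c*y - q)/(2*s*y)) with hF
  -- continuity of F on the closed interval
  have hFcont : ContinuousOn F (Set.Icc (c-2*s) (c+2*s)) := by
    apply ContinuousOn.sub
    · apply ContinuousOn.add
      · apply Continuous.continuousOn
        fun_prop
      · apply Continuous.continuousOn
        apply Continuous.mul continuous_const
        exact Real.continuous_arcsin.comp (by fun_prop)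
    · rcases eq_or_lt_of_le hδ with hδ1 | hδ1
      · have h0 : δ - 1 = 0 := by rw [← hδ1]; ring
        simp only [h0, zero_mul]
        exact continuousOn_const
      · apply ContinuousOn.mul continuousOn_const
        apply Real.continuous_arcsin.comp_continuousOn
        apply ContinuousOn.div
        · fun_prop
        · fun_prop
        · intro y hy
          simp only [Set.mem_Icc] at hy
          have hylm : 0 < c - 2*s := by nlinarith [sq_nonneg (1-s)]
          have : 0 < y := lt_of_lt_of_le hylm hy.1
          positivity
  -- derivative of F on the open interval
  have hFderiv : ∀ x ∈ Set.Ioo (c-2*s) (c+2*s),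
      HasDerivWithinAt F (u x / x) (Set.Ioi x) x := by
    intro x hx
    apply HasDerivAt.hasDerivWithinAt
    obtain ⟨hx1, hx2⟩ := hx
    have hx0 : 0 < x := lt_of_le_of_lt hlm0 hx1
    have hgpos : 0 < (c+2*s - x)*(x - (c-2*s)) := by
      apply mul_pos <;> linarith
    have hupos : 0 < u x := Real.sqrt_pos.2 hgpos
    have husq : u x ^ 2 = (c+2*s - x)*(x - (c-2*s)) := Real.sq_sqrt (le_of_lt hgpos)
    have hune : u x ≠ 0 := ne_of_gt hupos
    -- derivative of u
    have hg : HasDerivAt (fun y => (c+2*s - y)*(y - (c-2*s))) (2*c - 2*x) x := by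
      have h1 : HasDerivAt (fun y : ℝ => c+2*s - y) (-1) x := by
        simpa using ((hasDerivAt_id x).const_sub (c+2*s))
      have h2 : HasDerivAt (fun y : ℝ => y - (c-2*s)) 1 x := by
        simpa using ((hasDerivAt_id x).sub_const (c-2*s))
      have := h1.mul h2
      refine this.congr_deriv (Eq.symm ?_)
      ring
    have hud : HasDerivAt u (1/(2*u x) * (2*c - 2*x)) x :=
      (Real.hasDerivAt_sqrt (ne_of_gt hgpos)).comp x hg
    -- derivative of the first arcsin term
    have hA : HasDerivAt (fun y => Real.arcsin ((y - c)/(2*s))) (1/u x) x := by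
      have hinner : HasDerivAt (fun y : ℝ => (y - c)/(2*s)) (1/(2*s)) x := by
        have := ((hasDerivAt_id x).sub_const c).div_const (2*s)
        simpa using this
      have hne1 : (x - c)/(2*s) ≠ -1 := by
        intro h
        have : x - c = -(2*s) := by
          field_simp at h
          linarith
        linarith
      have hne2 : (x - c)/(2*s) ≠ 1 := by
        intro h
        have : x - c = 2*s := by
          field_simp at h
          linarith
        linarith
      have := (Real.hasDerivAt_arcsin hne1 hne2).comp x hinner
      refine this.congr_deriv (Eq.symm ?_)
      have hsq : 1 - ((x - c)/(2*s))^2 = ((c+2*s - x)*(x - (c-2*s)))/(2*s)^2 := by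
        field_simp
        ring
      have hune' : Real.sqrt ((c+2*s - x)*(x - (c-2*s))) ≠ 0 := hune
      rw [hsq, Real.sqrt_div (le_of_lt hgpos), Real.sqrt_sq (by linarith : (0:ℝ) ≤ 2*s)]
      field_simp
      rfl
    -- derivative of the second arcsin term
    have hB : HasDerivAt (fun y => (δ-1) * Real.arcsin ((c*y - q)/(2*s*y)))
        ((δ-1) * ((δ-1)/(x * u x))) x := by
      rcases eq_or_lt_of_le hδ with hδ1 | hδ1
      · have h0 : δ - 1 = 0 := by rw [← hδ1]; ring
        have hfun : (fun y => (δ-1) * Real.arcsin ((c*y - q)/(2*s*y))) = fun _ => (0:ℝ) := by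
          funext y; rw [h0]; ring
        rw [hfun, h0, zero_mul]
        exact hasDerivAt_const x (0:ℝ)
      · have hq0 : 0 < q := by rw [hq]; nlinarith
        have hd0 : 0 < δ - 1 := by linarith
        have hxne : x ≠ 0 := ne_of_gt hx0
        have hinner : HasDerivAt (fun y : ℝ => (c*y - q)/(2*s*y)) (q/(2*s*x^2)) x := by
          have hnum : HasDerivAt (fun y : ℝ => c*y - q) c x := by
            simpa using ((hasDerivAt_id x).const_mul c).sub_const q
          have hden : HasDerivAt (fun y : ℝ => 2*s*y) (2*s) x := by
            simpa using (hasDerivAt_id x).const_mul (2*s)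
          have := hnum.div hden (by positivity)
          refine this.congr_deriv (Eq.symm ?_)
          field_simp
          ring
        have hkey : 1 - ((c*x - q)/(2*s*x))^2
            = q * ((c+2*s - x)*(x - (c-2*s)))/(2*s*x)^2 := by
          field_simp
          linear_combination (q - x^2) * hq4
        have h1mh : 0 < 1 - ((c*x - q)/(2*s*x))^2 := by
          rw [hkey]
          positivity
        have hne1 : (c*x - q)/(2*s*x) ≠ -1 := by
          intro h; rw [h] at h1mh; norm_num at h1mh
        have hne2 : (c*x - q)/(2*s*x) ≠ 1 := by
          intro h; rw [h] at h1mh; norm_num at h1mh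
        have harc := (Real.hasDerivAt_arcsin hne1 hne2).comp x hinner
        have hsq2 : ((δ-1) * u x/(2*s*x))^2
            = q * ((c+2*s - x)*(x - (c-2*s)))/(2*s*x)^2 := by
          rw [div_pow, mul_pow, husq, ← hq]
        have hsqrt : Real.sqrt (1 - ((c*x - q)/(2*s*x))^2) = (δ-1) * u x/(2*s*x) := by
          rw [hkey, ← hsq2]
          exact Real.sqrt_sq (by positivity)
        have := harc.const_mul (δ-1)
        refine this.congr_deriv (Eq.symm ?_)
        rw [hsqrt]
        rw [hq]
        field_simp
    have hsum := (hud.add (hA.const_mul c)).sub hB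
    refine hsum.congr_deriv (Eq.symm ?_)
    have hnum2 : u x ^ 2 = 2*c*x - x^2 - (δ-1)^2 := by
      rw [husq]; linear_combination - hq4 - hq
    have hA2 : 1/(2*u x)*(2*c-2*x) + c*(1/u x) - (δ-1)*((δ-1)/(x*u x))
        = (2*c*x - x^2 - (δ-1)^2) / (x * u x) := by
      field_simp
      ring
    rw [hA2, ← hnum2, sq, mul_comm x (u x), mul_div_mul_left _ _ hune]
  -- integrability of u x / x
  have hint : IntervalIntegrable (fun x => u x / x) volume (c-2*s) (c+2*s) := by
    have hs0' : (0:ℝ) ≤ Real.sqrt s := Real.sqrt_nonneg s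
    have hgint : IntervalIntegrable (fun x : ℝ => 2*Real.sqrt s * x ^ (-(1:ℝ)/2))
        volume (c-2*s) (c+2*s) := by
      apply IntervalIntegrable.const_mul
      apply intervalIntegral.intervalIntegrable_rpow'
      norm_num
    apply IntervalIntegrable.mono_fun hgint
    · apply Measurable.aestronglyMeasurable
      exact ((Real.continuous_sqrt.comp (by fun_prop)).measurable).div measurable_id
    · rw [Set.uIoc_of_le hle]
      filter_upwards [ae_restrict_mem measurableSet_Ioc] with x hx
      obtain ⟨hx1, hx2⟩ := hx
      have hx0 : 0 < x := lt_of_le_of_lt hlm0 hx1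
      have hb1 : (c+2*s - x)*(x - (c-2*s)) ≤ (2*Real.sqrt s)^2 * x := by
        have h4s : (2*Real.sqrt s)^2 = 4*s := by
          rw [mul_pow, Real.sq_sqrt (by linarith : (0:ℝ) ≤ s)]
          ring
        rw [h4s]
        nlinarith
      have hb2 : u x ≤ 2*Real.sqrt s * Real.sqrt x := by
        have := Real.sqrt_le_sqrt hb1
        rw [Real.sqrt_mul (by positivity) x, Real.sqrt_sq (by positivity)] at this
        exact this
      have hx12 : Real.sqrt x / x = x ^ (-(1:ℝ)/2) := by
        rw [Real.sqrt_eq_rpow, show (-(1:ℝ)/2) = (1:ℝ)/2 - 1 by norm_num,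
          Real.rpow_sub hx0, Real.rpow_one]
      have hfx : 0 ≤ u x / x := by positivity
      have hgx : 0 ≤ 2*Real.sqrt s * x ^ (-(1:ℝ)/2) := by positivity
      rw [Real.norm_eq_abs, Real.norm_eq_abs, abs_of_nonneg hfx, abs_of_nonneg hgx]
      rw [← hx12]
      calc u x / x ≤ (2*Real.sqrt s * Real.sqrt x) / x := by
            gcongr
        _ = 2*Real.sqrt s * (Real.sqrt x / x) := by ring
  have hFTC := intervalIntegral.integral_eq_sub_of_hasDeriv_right_of_le hle hFcont hFderiv hint
  have hulp : u (c+2*s) = 0 := by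
    simp only [hu, sub_self, zero_mul, Real.sqrt_zero]
  have hulm : u (c-2*s) = 0 := by
    simp only [hu, sub_self, mul_zero, Real.sqrt_zero]
  have ha1 : (c+2*s - c)/(2*s) = 1 := by
    rw [div_eq_one_iff_eq (by positivity)]
    ring
  have ha2 : (c-2*s - c)/(2*s) = -1 := by
    rw [div_eq_iff (by positivity : (2*s) ≠ 0)]
    ring
  have hblp : (c*(c+2*s) - q)/(2*s*(c+2*s)) = 1 := by
    rw [div_eq_one_iff_eq (by positivity)]
    linear_combination hq4
  calc ∫ x in (c-2*s)..(c+2*s),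
        Real.sqrt (((c+2*s) - x) * (x - (c-2*s))) / x
      = F (c+2*s) - F (c-2*s) := hFTC
    _ = 2*π := by
        simp only [hF]
        rw [hulp, hulm, ha1, ha2, hblp, Real.arcsin_one, Real.arcsin_neg_one]
        rcases eq_or_lt_of_le hδ with hδ1 | hδ1
        · have h0 : δ - 1 = 0 := by rw [← hδ1]; ring
          have hc2 : c = 2 := by rw [hc, ← hδ1]; norm_num
          rw [h0, hc2]
          ring
        · have hlmpos : 0 < c - 2*s := by nlinarith [sq_nonneg (1-s)]
          have hblm : (c*(c-2*s) - q)/(2*s*(c-2*s)) = -1 := by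
            rw [div_eq_iff (by positivity : 2*s*(c-2*s) ≠ 0)]
            linear_combination hq4
          rw [hblm, Real.arcsin_neg_one, hc]
          ring




lemma mseq_zero (δ : ℝ) : mseq δ 0 = 1 := by
  simp [mseq, e]

lemma mseq_one (δ : ℝ) : mseq δ 1 = 1 + δ := by
  rw [mseq, Finset.sum_range_succ, Finset.sum_range_one]
  simp [e]

lemma mseq_rec (δ : ℝ) (j : ℕ) :
    mseq δ (j+1) = (1+δ) * mseq δ j
      + δ * ∑ i ∈ Finset.range j, mseq δ i * mseq δ (j-1-i) := by
  cases j with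
  | zero => simp [mseq_one, mseq_zero]
  | succ j' =>
    have h := m_quad δ j'
    have hidx : ∀ i ∈ Finset.range (j'+1), mseq δ i * mseq δ (j'+1-1-i)
        = mseq δ i * mseq δ (j'-i) := by
      intro i _
      have hh : j'+1-1-i = j'-i := by omega
      rw [hh]
    rw [Finset.sum_congr rfl hidx]
    exact h

lemma a_eq (δ : ℝ) (a : ℕ → ℝ) (ha0 : a 0 = 1)
    (harec : ∀ n : ℕ, a (n + 1) =
      (δ - 1) * a n + ∑ k ∈ Finset.range (n + 1), a k * a (n - k)) :
    ∀ n : ℕ, a (n+1) = δ * mseq δ n := by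
  intro n
  induction n using Nat.strong_induction_on with
  | _ n ih =>
    cases n with
    | zero =>
      rw [harec 0, mseq_zero, Finset.sum_range_one, ha0]
      norm_num
    | succ j =>
      rw [harec (j+1)]
      have hsum : ∑ k ∈ Finset.range (j+2), a k * a (j+1-k)
          = δ*δ * (∑ i ∈ Finset.range j, mseq δ i * mseq δ (j-1-i))
            + 2 * (δ * mseq δ j) := by
        rw [Finset.sum_range_succ' (fun k => a k * a (j+1-k)) (j+1)]
        rw [Finset.sum_range_succ (fun i => a (i+1) * a (j+1-(i+1))) j]
        have h1 : ∀ i ∈ Finset.range j, a (i+1) * a (j+1-(i+1))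
            = δ*δ * (mseq δ i * mseq δ (j-1-i)) := by
          intro i hi
          simp only [Finset.mem_range] at hi
          have hai : a (i+1) = δ * mseq δ i := ih i (by omega)
          have hj1 : j+1-(i+1) = (j-1-i)+1 := by omega
          have haj : a (j+1-(i+1)) = δ * mseq δ (j-1-i) := by
            rw [hj1]
            exact ih (j-1-i) (by omega)
          rw [hai, haj]
          ring
        rw [Finset.sum_congr rfl h1, ← Finset.mul_sum]
        have h2 : a (j+1) = δ * mseq δ j := ih j (by omega)
        have h3 : j+1-(j+1) = 0 := by omega
        have h4 : j + 1 - 0 = j+1 := rfl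
        rw [h3, h4, ha0, h2]
        ring
      rw [hsum, ih j (by omega), mseq_rec δ j]
      ring


end FreePoissonAux

open FreePoissonAux Real in
/-- The moments of the Marchenko–Pastur (free Poisson) law of rate `δ ≥ 1`, with
density `√((λ₊−x)(x−λ₋))/(2πx)` on `(λ₋, λ₊]` where `λ± = (1±√δ)²`, are exactly
the numbers `a n = Tr₀(∪ⁿ)` given by the paper's recursion.  In particular
(`n = 0`) the density defines a probability measure, which is absolutely
continuous and hence atomless. -/
theorem freePoisson_moments (δ : ℝ) (hδ : 1 ≤ δ) (a : ℕ → ℝ)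
    (ha0 : a 0 = 1)
    (harec : ∀ n : ℕ, a (n + 1) =
      (δ - 1) * a n + ∑ k ∈ Finset.range (n + 1), a k * a (n - k))
    (lm lp : ℝ)
    (hlm : lm = (1 - Real.sqrt δ) ^ 2) (hlp : lp = (1 + Real.sqrt δ) ^ 2) :
    ∀ n : ℕ,
      ∫ x in Set.Ioc lm lp,
        x ^ n * Real.sqrt ((lp - x) * (x - lm)) / (2 * Real.pi * x) = a n := by
  have hδ0 : (0:ℝ) ≤ δ := by linarith
  have hs2 : Real.sqrt δ ^ 2 = δ := Real.sq_sqrt hδ0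
  have hs1 : 1 ≤ Real.sqrt δ := Real.one_le_sqrt.2 hδ
  have hlm' : lm = (1+δ) - 2*Real.sqrt δ := by rw [hlm]; linear_combination hs2
  have hlp' : lp = (1+δ) + 2*Real.sqrt δ := by rw [hlp]; linear_combination hs2
  have hlm0 : 0 ≤ lm := by rw [hlm]; positivity
  have hle : lm ≤ lp := by rw [hlm', hlp']; linarith
  have hπ : (2*π) ≠ 0 := by positivity
  intro n
  rw [← intervalIntegral.integral_of_le hle]
  cases n with
  | zero =>
    have hcongr : Set.EqOn
        (fun x => x ^ 0 * Real.sqrt ((lp - x) * (x - lm)) / (2 * Real.pi * x))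
        (fun x => (1/(2*π)) *
          (Real.sqrt ((((1+δ) + 2*Real.sqrt δ) - x) * (x - ((1+δ) - 2*Real.sqrt δ))) / x))
        (Set.uIcc lm lp) := by
      intro x _
      simp only [pow_zero, one_mul, ← hlm', ← hlp']
      rw [div_mul_div_comm, one_mul]
    rw [intervalIntegral.integral_congr hcongr, intervalIntegral.integral_const_mul]
    rw [hlm', hlp', massInt δ (Real.sqrt δ) (1+δ) ((δ-1)^2) hδ rfl rfl rfl, ha0]
    field_simp
  | succ n =>
    have hcongr : Set.EqOn
        (fun x => x ^ (n+1) * Real.sqrt ((lp - x) * (x - lm)) / (2 * Real.pi * x))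
        (fun x => (1/(2*π)) *
          (x^n * Real.sqrt ((((1+δ) + 2*Real.sqrt δ) - x) * (x - ((1+δ) - 2*Real.sqrt δ)))))
        (Set.uIcc lm lp) := by
      intro x hx
      rw [Set.uIcc_of_le hle, Set.mem_Icc] at hx
      simp only [← hlm', ← hlp']
      by_cases hx0 : x = 0
      · subst hx0
        have hlm00 : lm = 0 := le_antisymm hx.1 hlm0
        simp [hlm00, zero_pow]
      · field_simp
        ring
    rw [intervalIntegral.integral_congr hcongr, intervalIntegral.integral_const_mul]
    rw [hlm', hlp', keyInt δ hδ n, a_eq δ a ha0 harec n]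
    field_simp
end

section
/- Let X be a type and k : ℕ. For lists u, v over X with 2k ≤ u.length and 2k ≤ v.length, define the stitching product u ⋄ v : Option (List X) by: u ⋄ v = some (u.take (u.length − k) ++ v.drop k) if (u.takeRight k).reverse = v.take k, and u ⋄ v = none otherwise. Then for all lists u, v, w over X each of length ≥ 2k, (u ⋄ v).bind (fun y => y ⋄ w) = (v ⋄ w).bind (fun y => u ⋄ y); equivalently, the bilinear extension of ⋄ (with none interpreted as 0) to the free ℂ-module on words of length ≥ 2k is an associative multiplication. (This is the paper's assertion that Gr_kP with the graded multiplication ∧_k, given on monomials by (X₁⋯X_r) ∧_k (Y₁⋯Y_s) = (Π_{i=1}^k δ_{X_{r−i+1},Y_i}) X₁⋯X_{r−k}Y_{k+1}⋯Y_s, is an associative algebra, in the special case of free self-adjoint variables.) -/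
open scoped Classical

/-- The stitching product of words: `u ⋄ v` caps off the last `k` letters of `u`
against the first `k` letters of `v` (returning `none`, i.e. `0`, unless they
match in reverse order) and concatenates the rest.  This is the graded
multiplication `∧_k` on monomials in free self-adjoint variables. -/
noncomputable def stitch {X : Type*} (k : ℕ) (u v : List X) : Option (List X) :=
  if (u.drop (u.length - k)).reverse = v.take k then
    some (u.take (u.length - k) ++ v.drop k)
  else none

/-- Associativity of the graded multiplication `∧_k` on `Gr_k P` in the special
case of free self-adjoint variables: the stitching product of words of length
`≥ 2k` is associative (with `none` interpreted as `0`). -/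
theorem stitch_assoc {X : Type*} (k : ℕ) (u v w : List X)
    (hu : 2 * k ≤ u.length) (hv : 2 * k ≤ v.length) (hw : 2 * k ≤ w.length) :
    (stitch k u v).bind (fun y => stitch k y w) =
      (stitch k v w).bind (fun y => stitch k u y) := by
  have h1 : (u.take (u.length - k) ++ v.drop k).length
      = (u.length - k) + (v.length - k) := by
    simp only [List.length_append, List.length_take, List.length_drop]
    omega
  have key1 : (u.take (u.length - k) ++ v.drop k).drop
      ((u.take (u.length - k) ++ v.drop k).length - k) = v.drop (v.length - k) := by
    rw [h1]
    have e : (u.length - k) + (v.length - k) - k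
        = (u.take (u.length - k)).length + (v.length - 2*k) := by
      simp only [List.length_take]; omega
    rw [e, List.drop_length_add_append, List.drop_drop]
    congr 1
    omega
  have key2 : (v.take (v.length - k) ++ w.drop k).take k = v.take k := by
    rw [List.take_append_of_le_length, List.take_take]
    · congr 1; omega
    · simp only [List.length_take]; omega
  unfold stitch
  by_cases C1 : (u.drop (u.length - k)).reverse = v.take k <;>
    by_cases C2 : (v.drop (v.length - k)).reverse = w.take k
  · rw [if_pos C1, if_pos C2, Option.bind_some, Option.bind_some,
      if_pos (key1 ▸ C2 : _), if_pos (key2 ▸ C1 : _)]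
    congr 1
    have e1 : (u.take (u.length - k) ++ v.drop k).length - k
        = (u.take (u.length - k)).length + (v.length - 2*k) := by
      rw [h1]; simp only [List.length_take]; omega
    rw [e1, List.take_length_add_append, List.append_assoc]
    congr 1
    have e2 : (v.take (v.length - k) ++ w.drop k).drop k
        = (v.take (v.length - k)).drop k ++ w.drop k := by
      apply List.drop_append_of_le_length
      simp only [List.length_take]; omega
    rw [e2, List.drop_take, show v.length - k - k = v.length - 2*k from by omega]
  · rw [if_pos C1, if_neg C2, Option.bind_some, Option.bind_none,
      if_neg (fun h => C2 (key1 ▸ h))]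
  · rw [if_neg C1, if_pos C2, Option.bind_none, Option.bind_some,
      if_neg (fun h => C1 (key2 ▸ h))]
  · rw [if_neg C1, if_neg C2]
    rfl
end

section
/- Let V be a type, G : SimpleGraph V a connected simple graph, and v : V. Assume that every closed walk of length 4 based at v passes through v at its midpoint, i.e., for all a b : V, if G.Adj v a and G.Adj a b then b = v (equivalently, every length-4 loop at v is of the form e e^o f f^o). Then every vertex w ≠ v is adjacent to v, and every edge of G is incident to v; that is, G is a star with center v. (This is the paper's Lemma: if a connected bipartite graph with N+1 vertices has no length-4 loop at v other than those of the form e e^o f f^o, then the remaining N vertices are each connected to v by a single edge and the graph has no other edges.) -/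
/-- If `G` is a connected simple graph and `v` a vertex such that every walk of
two steps starting at `v` returns to `v` (i.e. every closed walk of length 4
based at `v` is of the form `e e^o f f^o`), then every other vertex is adjacent
to `v` and every edge is incident to `v`: the graph is a star with center `v`. -/
theorem star_of_no_nontrivial_length_four_loops {V : Type*} (G : SimpleGraph V)
    (hconn : G.Connected) (v : V)
    (h : ∀ a b : V, G.Adj v a → G.Adj a b → b = v) :
    (∀ w : V, w ≠ v → G.Adj v w) ∧ (∀ a b : V, G.Adj a b → a = v ∨ b = v) := by
  have closure : ∀ u w : V, G.Walk u w → (u = v ∨ G.Adj v u) → (w = v ∨ G.Adj v w) := by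
    intro u w p
    induction p with
    | nil => exact id
    | cons hadj _ ih =>
      intro hu
      apply ih
      rcases hu with rfl | hvu
      · exact Or.inr hadj
      · exact Or.inl (h _ _ hvu hadj)
  have key : ∀ w : V, w = v ∨ G.Adj v w := by
    intro w
    obtain ⟨p⟩ := hconn v w
    exact closure v w p (Or.inl rfl)
  refine ⟨fun w hw => (key w).resolve_left hw, fun a b hab => ?_⟩
  rcases key a with rfl | hva
  · exact Or.inl rfl
  · exact Or.inr (h _ _ hva hab)
end

section
/- Let H and K be complex Hilbert spaces, let A : H →L[ℂ] H and B : K →L[ℂ] K be bounded self-adjoint operators, and assume A has no eigenvalues, i.e., for every c : ℂ and x : H, A x = c • x implies x = 0. If T : K →L[ℂ] H is a compact operator satisfying A ∘L T = T ∘L B, then T = 0. (This is the key Hilbert-space fact used in the paper's proof that W*(∪) is a singular MASA: a vector Ξ with λ_v Ξ = ρ_w Ξ in a multiple of a coarse bimodule would give a nonzero Hilbert–Schmidt intertwiner of operators with non-atomic spectral measure, which is impossible.) -/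
set_option maxHeartbeats 1000000
open ContinuousLinearMap Metric Filter Topology RCLike

/-- If `A` is a bounded self-adjoint operator without eigenvalues on a complex
Hilbert space `H`, `B` is a bounded self-adjoint operator on a complex Hilbert
space `K`, and `T : K → H` is a compact operator intertwining them
(`A ∘ T = T ∘ B`), then `T = 0`.  This is the Hilbert-space fact behind the
paper's proof that `W*(∪)` is a singular MASA. -/
theorem compact_intertwiner_eq_zero {H K : Type*}
    [NormedAddCommGroup H] [InnerProductSpace ℂ H] [CompleteSpace H]
    [NormedAddCommGroup K] [InnerProductSpace ℂ K] [CompleteSpace K]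
    (A : H →L[ℂ] H) (B : K →L[ℂ] K)
    (hA : IsSelfAdjoint A) (hB : IsSelfAdjoint B)
    (hAeig : ∀ (c : ℂ) (x : H), A x = c • x → x = 0)
    (T : K →L[ℂ] H) (hT : IsCompactOperator (⇑T))
    (hint : A.comp T = T.comp B) :
    T = 0 := by
  by_contra hT0
  set Tad : H →L[ℂ] K := ContinuousLinearMap.adjoint T with hTad
  set S : H →L[ℂ] H := T ∘L Tad with hSdef
  set c : ℝ := ‖T‖ with hc
  have hc0 : 0 < c := norm_pos_iff.mpr hT0
  set M : ℝ := c * c with hM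
  have hM0 : 0 < M := mul_pos hc0 hc0
  have hTadnorm : ‖Tad‖ = c := LinearIsometryEquiv.norm_map _ T
  -- the intertwining relation for adjoints
  have hadj : Tad ∘L A = B ∘L Tad := by
    have h1 := congrArg ContinuousLinearMap.adjoint hint
    rw [adjoint_comp, adjoint_comp, hA.adjoint_eq, hB.adjoint_eq] at h1
    exact h1
  -- S commutes with A
  have hcomm : A ∘L S = S ∘L A := by
    rw [hSdef, ← comp_assoc, hint, comp_assoc, ← hadj, ← comp_assoc]
  -- S is compact
  have hS : IsCompactOperator (⇑S) := by
    have := hT.comp_clm Tad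
    rwa [show ⇑T ∘ ⇑Tad = ⇑S from rfl] at this
  -- re ⟪S x, x⟫ = ‖Tad x‖²
  have hre : ∀ x : H, re (inner ℂ (S x) x : ℂ) = ‖Tad x‖ ^ 2 := by
    intro x
    have h1 : (inner ℂ (Tad x) (Tad x) : ℂ) = inner ℂ x (S x) := adjoint_inner_left T (Tad x) x
    have h2 : re (inner ℂ (S x) x : ℂ) = re (inner ℂ x (S x) : ℂ) := inner_re_symm _ _
    rw [h2, ← h1]
    simp [inner_self_eq_norm_sq, ← Complex.ofReal_pow, Complex.ofReal_re]
  have hSapp : ∀ y : H, S y = T (Tad y) := fun _ => rfl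
  clear_value S Tad c M
  -- maximizing sequence
  have hseq : ∀ n : ℕ, ∃ x : H, ‖x‖ < 1 ∧ c - 1 / (n + 1) < ‖Tad x‖ := by
    intro n
    have hlt : c - 1 / (n + 1) < ‖Tad‖ := by
      rw [hTadnorm]
      have : (0 : ℝ) < 1 / (n + 1) := by positivity
      linarith
    exact Tad.exists_lt_apply_of_lt_opNorm hlt
  choose x hx1 hx2 using hseq
  set a : ℕ → ℝ := fun n => ‖Tad (x n)‖ with ha
  have haub : ∀ n, a n ≤ c * ‖x n‖ := by
    intro n
    calc a n ≤ ‖Tad‖ * ‖x n‖ := Tad.le_opNorm _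
      _ = c * ‖x n‖ := by rw [hTadnorm]
  have hac : Tendsto a atTop (𝓝 c) := by
    have hlow : Tendsto (fun n : ℕ => c - 1 / (n + 1 : ℝ)) atTop (𝓝 c) := by
      have := tendsto_one_div_add_atTop_nhds_zero_nat (𝕜 := ℝ)
      simpa using (tendsto_const_nhds (x := c)).sub this
    refine tendsto_of_tendsto_of_tendsto_of_le_of_le hlow tendsto_const_nhds
      (fun n => (hx2 n).le) (fun n => ?_)
    calc a n ≤ c * ‖x n‖ := haub n
      _ ≤ c * 1 := by
        apply mul_le_mul_of_nonneg_left (hx1 n).le hc0.le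
      _ = c := mul_one c
  -- key estimate
  have hkey : ∀ n, ‖S (x n) - (M : ℂ) • x n‖ ^ 2 ≤ M ^ 2 - M * (a n) ^ 2 := by
    intro n
    have hnorm_sub : ‖S (x n) - (M : ℂ) • x n‖ ^ 2
        = ‖S (x n)‖ ^ 2 - 2 * re (inner ℂ (S (x n)) ((M : ℂ) • x n) : ℂ) + ‖(M : ℂ) • x n‖ ^ 2 :=
      norm_sub_sq _ _
    have hre2 : re (inner ℂ (S (x n)) ((M : ℂ) • x n) : ℂ) = M * (a n) ^ 2 := by
      have h := hre (x n)
      rw [inner_smul_right]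
      simp only [ha]
      simp [h]
    have hSn : ‖S (x n)‖ ^ 2 ≤ M * (a n) ^ 2 := by
      have h1 : ‖S (x n)‖ ≤ c * a n := by
        calc ‖S (x n)‖ = ‖T (Tad (x n))‖ := by rw [hSapp]
          _ ≤ ‖T‖ * ‖Tad (x n)‖ := T.le_opNorm _
          _ = c * a n := by rw [← hc, ha]
      calc ‖S (x n)‖ ^ 2 ≤ (c * a n) ^ 2 := by
            apply sq_le_sq' _ h1
            have := norm_nonneg (S (x n)); nlinarith [norm_nonneg (Tad (x n)), hc0.le]
        _ = M * (a n) ^ 2 := by rw [hM]; ring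
    have hMx : ‖(M : ℂ) • x n‖ ^ 2 ≤ M ^ 2 := by
      rw [norm_smul]
      simp only [Complex.norm_real, Real.norm_eq_abs, abs_of_pos hM0]
      have h1 := (hx1 n).le
      have h0 := norm_nonneg (x n)
      nlinarith [mul_le_mul h1 h1 h0 zero_le_one, sq_nonneg M, mul_nonneg hM0.le h0]
    rw [hnorm_sub, hre2]
    nlinarith
  -- S (x n) - M • x n → 0
  have hdiff : Tendsto (fun n => S (x n) - (M : ℂ) • x n) atTop (𝓝 0) := by
    rw [tendsto_zero_iff_norm_tendsto_zero]
    have hub : Tendsto (fun n => M ^ 2 - M * (a n) ^ 2) atTop (𝓝 0) := by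
      have h1 : Tendsto (fun n => M ^ 2 - M * (a n) ^ 2) atTop (𝓝 (M ^ 2 - M * c ^ 2)) :=
        tendsto_const_nhds.sub (tendsto_const_nhds.mul (hac.pow 2))
      have : M ^ 2 - M * c ^ 2 = 0 := by rw [hM]; ring
      rwa [this] at h1
    have hsq : Tendsto (fun n => ‖S (x n) - (M : ℂ) • x n‖ ^ 2) atTop (𝓝 0) :=
      squeeze_zero (fun n => sq_nonneg _) hkey hub
    have h2 := hsq.sqrt
    rw [Real.sqrt_zero] at h2
    exact h2.congr fun n => Real.sqrt_sq (norm_nonneg _)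
  -- extract a convergent subsequence
  obtain ⟨Kc, hKc, hKsub⟩ := hS.image_closedBall_subset_compact 1
  have hmem : ∀ n, S (x n) ∈ Kc := fun n =>
    hKsub ⟨x n, by simpa [mem_closedBall_zero_iff] using (hx1 n).le, rfl⟩
  obtain ⟨y, hy, φ, hφ, hconv⟩ := hKc.tendsto_subseq hmem
  have hdiffφ : Tendsto (fun n => S (x (φ n)) - (M : ℂ) • x (φ n)) atTop (𝓝 0) :=
    hdiff.comp hφ.tendsto_atTop
  have hMz : (M : ℂ) ≠ 0 := Complex.ofReal_ne_zero.mpr hM0.ne'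
  have hMxc : Tendsto (fun n => (M : ℂ) • x (φ n)) atTop (𝓝 y) := by
    have heq : (fun n => (M : ℂ) • x (φ n))
        = fun n => S (x (φ n)) - (S (x (φ n)) - (M : ℂ) • x (φ n)) := by
      funext n; abel
    rw [heq]
    simpa using hconv.sub hdiffφ
  set z : H := (M : ℂ)⁻¹ • y with hzdef
  have hxz : Tendsto (fun n => x (φ n)) atTop (𝓝 z) := by
    have h3 := hMxc.const_smul ((M : ℂ)⁻¹)
    rw [← hzdef] at h3
    exact h3.congr fun n => by rw [smul_smul, inv_mul_cancel₀ hMz, one_smul]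
  have hSz : S z = (M : ℂ) • z := by
    have h1 : Tendsto (fun n => S (x (φ n))) atTop (𝓝 (S z)) :=
      (S.continuous.tendsto z).comp hxz
    have h2 : Tendsto (fun n => S (x (φ n))) atTop (𝓝 ((M : ℂ) • z)) := by
      have h3 := hxz.const_smul ((M : ℂ))
      have heq : (fun n => S (x (φ n)))
          = fun n => (S (x (φ n)) - (M : ℂ) • x (φ n)) + (M : ℂ) • x (φ n) := by
        funext n; abel
      rw [heq]
      simpa using hdiffφ.add h3
    exact tendsto_nhds_unique h1 h2
  have hz1 : 1 ≤ ‖z‖ := by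
    have hn : Tendsto (fun n => ‖x (φ n)‖) atTop (𝓝 ‖z‖) := hxz.norm
    have hlb : Tendsto (fun n => a (φ n) / c) atTop (𝓝 1) := by
      have h4 := (hac.comp hφ.tendsto_atTop).div_const c
      simpa [div_self hc0.ne'] using h4
    refine le_of_tendsto_of_tendsto' hlb hn fun n => ?_
    rw [div_le_iff₀ hc0]
    have := haub (φ n)
    linarith
  have hz0 : z ≠ 0 := by
    intro h; rw [h, norm_zero] at hz1; linarith
  -- the eigenspace of S for M
  set E : Submodule ℂ H := LinearMap.ker (S - (M : ℂ) • (1 : H →L[ℂ] H)).toLinearMap with hE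
  have hmemE : ∀ u : H, u ∈ E ↔ S u = (M : ℂ) • u := by
    intro u
    rw [hE, LinearMap.mem_ker]
    have happ : (S - (M : ℂ) • (1 : H →L[ℂ] H)) u = S u - (M : ℂ) • u := by
      simp [ContinuousLinearMap.sub_apply, ContinuousLinearMap.smul_apply]
    rw [ContinuousLinearMap.coe_coe, happ, sub_eq_zero]
  have hEclosed : IsClosed (E : Set H) := ContinuousLinearMap.isClosed_ker (S - (M : ℂ) • (1 : H →L[ℂ] H))
  haveI : CompleteSpace E := hEclosed.completeSpace_coe
  have hzE : z ∈ E := (hmemE z).mpr hSz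
  -- E is invariant under A
  have hAinv : ∀ u ∈ E, A u ∈ E := by
    intro u hu
    rw [hmemE] at hu ⊢
    have hSA : S (A u) = A (S u) := by
      calc S (A u) = (S ∘L A) u := rfl
        _ = (A ∘L S) u := by rw [hcomm]
        _ = A (S u) := rfl
    rw [hSA, hu, map_smul]
  -- E is finite-dimensional (Riesz)
  have hCsub : (E : Set H) ∩ closedBall 0 1 ⊆ (fun w => (M : ℂ)⁻¹ • w) '' Kc := by
    rintro u ⟨huE, hub⟩
    refine ⟨S u, hKsub ⟨u, hub, rfl⟩, ?_⟩
    rw [(hmemE u).mp huE]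
    show (M : ℂ)⁻¹ • (M : ℂ) • u = u
    rw [smul_smul, inv_mul_cancel₀ hMz, one_smul]
  have hCcompact : IsCompact ((E : Set H) ∩ closedBall 0 1) := by
    have himg : IsCompact ((fun w => (M : ℂ)⁻¹ • w) '' Kc) :=
      hKc.image (continuous_const_smul _)
    exact himg.of_isClosed_subset (hEclosed.inter isClosed_closedBall) hCsub
  haveI : FiniteDimensional ℂ E := by
    apply FiniteDimensional.of_isCompact_closedBall₀ ℂ (r := 1) one_pos
    have hval : Subtype.val '' (closedBall (0 : E) 1) = (E : Set H) ∩ closedBall 0 1 := by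
      ext u
      constructor
      · rintro ⟨v, hv, rfl⟩
        rw [mem_closedBall_zero_iff] at hv
        exact ⟨v.2, by simpa [mem_closedBall_zero_iff] using hv⟩
      · rintro ⟨h1, h2⟩
        rw [mem_closedBall_zero_iff] at h2
        exact ⟨⟨u, h1⟩, by simpa [mem_closedBall_zero_iff] using h2, rfl⟩
    rw [Topology.IsEmbedding.subtypeVal.isCompact_iff, hval]
    exact hCcompact
  haveI : Nontrivial E :=
    nontrivial_of_ne ⟨z, hzE⟩ 0 (fun h => hz0 (by simpa using congrArg Subtype.val h))
  -- A restricts to an endomorphism of E, which has an eigenvector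
  set f : Module.End ℂ E := (A : H →ₗ[ℂ] H).restrict hAinv with hf
  obtain ⟨μ, hμ⟩ := Module.End.exists_eigenvalue f
  obtain ⟨v, hv⟩ := hμ.exists_hasEigenvector
  have hv1 : A (v : H) = μ • (v : H) := by
    have h5 := hv.apply_eq_smul
    have h6 := congrArg (Subtype.val) h5
    simpa [hf, LinearMap.restrict_apply] using h6
  exact hv.2 (Subtype.ext (by simpa using hAeig μ (v : H) hv1))
end
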